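/- arXiv:0902.3583 — 5 statements merged into one kernel-verified Lean document; each statement's English description precedes it below -/
import Mathlib

section
/- There is an absolute constant C > 0 such that for all integers n ≥ 1 and μ ≥ 1 the following holds. Throw μ distinguishable balls independently and uniformly at random into n bins, let Z(μ,n) be the number of empty bins, and set λ = n·exp(−μ/n). Then P[Z(μ,n) ≤ λ/2] ≤ C·√μ·exp(−λ/8). -/
/-!
Chernoff bound with the exponential moment `E[2^{-Z}]`: by Markov,
`P[Z ≤ λ/2] ≤ 2^{λ/2} E[2^{-Z}]`. Exactly `μ!/∏ v_b!` maps have load vector `v`, so grouping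
the `n^μ` maps by their loads and dropping the constraint `∑ v_b = μ` (Poissonization) gives
`∑_f 2^{-Z(f)} c^μ ≤ μ! (e^c - 1/2)^n` for every `c ≥ 0`. For `c = μ/n` one has
`(e^c - 1/2)^n ≤ e^{μ - λ/2}`, Stirling gives `μ! e^μ ≤ e √μ μ^μ`, and
`2^{λ/2} e^{-λ/2} ≤ e^{-λ/8}` because `log 2 ≤ 3/4`.
-/

open Finset MeasureTheory Filter
open scoped ENNReal

attribute [local instance] Classical.propDecidable

namespace RandomKSAT

/-- A literal over `n` variables: a pair (variable, sign), `true` = positive occurrence. -/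
abbrev Lit (n : ℕ) := Fin n × Bool

/-- A `k`-SAT formula with `n` variables and `m` (ordered) clauses, each an ordered
`k`-tuple of literals. -/
abbrev Formula (n m k : ℕ) := Fin m → Fin k → Lit n

instance formulaMS (n m k : ℕ) : MeasurableSpace (Formula n m k) := ⊤

/-- The probability of an event under the uniform distribution on `Ω_k(n,m)`. -/
noncomputable def Pr (n m k : ℕ) (A : Set (Formula n m k)) : ℝ :=
  ((Finset.univ.filter (fun Φ : Formula n m k => Φ ∈ A)).card : ℝ) /
    ((Finset.univ : Finset (Formula n m k)).card : ℝ)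

/-- Expectation of a random variable with respect to the uniform distribution. -/
noncomputable def EV (n m k : ℕ) (f : Formula n m k → ℝ) : ℝ :=
  (∑ Φ : Formula n m k, f Φ) / (Fintype.card (Formula n m k) : ℝ)

/-- The uniform probability measure on `Ω_k(n,m)`. -/
noncomputable def unif (n m k : ℕ) : Measure (Formula n m k) :=
  ((Fintype.card (Formula n m k) : ℝ≥0∞))⁻¹ • Measure.count

variable {n m k : ℕ}

/-- A literal is true under an assignment. -/
def litTrue (σ : Fin n → Bool) (l : Lit n) : Prop := σ l.1 = l.2

/-- An assignment satisfies a formula if every clause contains a true literal. -/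
def sat (σ : Fin n → Bool) (Φ : Formula n m k) : Prop := ∀ i, ∃ j, litTrue σ (Φ i j)

/-- The assignment `σ_Z`: variables in `Z` are false, all others true. -/
noncomputable def sigmaZ (Z : Finset (Fin n)) : Fin n → Bool :=
  fun x => if x ∈ Z then false else true

/-- Number of positive literals of clause `i`. -/
noncomputable def posCount (Φ : Formula n m k) (i : Fin m) : ℕ :=
  (Finset.univ.filter (fun j => (Φ i j).2 = true)).card

/-- Clause `i` is all-negative. -/
def allNeg (Φ : Formula n m k) (i : Fin m) : Prop := ∀ j, (Φ i j).2 = false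

/-- The set of indices of `Z`-unique clauses: exactly one positive literal with variable
outside `Z`, and no negative literal with variable in `Z`. -/
noncomputable def Uset (Φ : Formula n m k) (Z : Finset (Fin n)) : Finset (Fin m) :=
  Finset.univ.filter (fun i =>
    (Finset.univ.filter (fun j => (Φ i j).2 = true ∧ (Φ i j).1 ∉ Z)).card = 1 ∧
    ∀ j, (Φ i j).2 = false → (Φ i j).1 ∉ Z)

/-- `U_t(x)`: the number of `Z`-unique clauses in which `x` occurs positively. -/
noncomputable def Ux (Φ : Formula n m k) (Z : Finset (Fin n)) (x : Fin n) : ℕ :=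
  ((Uset Φ Z).filter (fun i => ∃ j, Φ i j = (x, true))).card

/-- `k₁ = ⌈k/2⌉`. -/
def k1 (k : ℕ) : ℕ := (k + 1) / 2

/-- The map `π₀`: `Sum.inl b` records only the sign `b` of a literal, `Sum.inr l`
records the literal `l` itself (revealed). -/
noncomputable def pi0 (Φ : Formula n m k) (i : Fin m) (j : Fin k) : Bool ⊕ Lit n :=
  if i ∈ Uset Φ ∅ ∧ (Φ i j).2 = true then Sum.inr (Φ i j) else Sum.inl (Φ i j).2

/-- State of the Phase-1 process: the set `Z_t`, the map `π_t`, the clause `φ_t`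
and variable `z_t` chosen at the last step (if any), and whether the process stopped. -/
structure P1State (n m k : ℕ) where
  Z : Finset (Fin n)
  pi : Fin m → Fin k → Bool ⊕ Lit n
  lastPhi : Option (Fin m)
  lastZ : Option (Fin n)
  stopped : Bool

/-- One step (PI1--PI4) of the Phase-1 process. -/
noncomputable def p1step (Φ : Formula n m k) (s : P1State n m k) : P1State n m k :=
  if s.stopped then s else
  let E := Finset.univ.filter (fun i : Fin m => allNeg Φ i ∧ ∀ j, (Φ i j).1 ∉ s.Z)
  if hE : E.Nonempty then
    if hk : 0 < k then
      let φt := E.min' hE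
      let J := Finset.univ.filter
        (fun j : Fin k => j.val + 1 < k1 k ∧ Ux Φ s.Z ((Φ φt j).1) = 0)
      let jsel : Fin k :=
        if hJ : J.Nonempty then J.min' hJ
        else ⟨min (k1 k - 1) (k - 1), by
          have h1 := Nat.min_le_right (k1 k - 1) (k - 1); omega⟩
      let z := (Φ φt jsel).1
      let Z' := insert z s.Z
      { Z := Z'
        pi := fun i j =>
          if (i = φt ∧ j.val < k1 k) ∨ (Φ i j).1 ∈ Z' ∨
             (i ∈ Uset Φ Z' ∧ pi0 Φ i j = Sum.inl true)
          then Sum.inr (Φ i j) else s.pi i j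
        lastPhi := some φt
        lastZ := some z
        stopped := false }
    else { s with stopped := true, lastPhi := none, lastZ := none }
  else { s with stopped := true, lastPhi := none, lastZ := none }

/-- The Phase-1 process: state after `t` steps. -/
noncomputable def p1 (Φ : Formula n m k) : ℕ → P1State n m k
  | 0 => ⟨∅, pi0 Φ, none, none, false⟩
  | t + 1 => p1step Φ (p1 Φ t)

/-- The stopping time `T` of the Phase-1 process. -/
noncomputable def TT (Φ : Formula n m k) : ℕ := sInf {t | (p1 Φ (t + 1)).stopped = true}

/-- The set `Z = Z_T` produced by Phase 1. -/
noncomputable def ZT (Φ : Formula n m k) : Finset (Fin n) := (p1 Φ (TT Φ)).Z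

/-- The set `𝒰_t`: clauses with a positive literal, but such that at time `t` no
position shows `π_t(i,j) = 1` nor a negative literal with variable in `Z_t`. -/
noncomputable def curlyU (Φ : Formula n m k) (t : ℕ) : Finset (Fin m) :=
  Finset.univ.filter (fun i =>
    (∃ j, pi0 Φ i j ≠ Sum.inl false) ∧
    ¬ ∃ j, (p1 Φ t).pi i j = Sum.inl true ∨
      ∃ x ∈ (p1 Φ t).Z, (p1 Φ t).pi i j = Sum.inr (x, false))

/-- The map `ψ_t : 𝒰_t → V` (junk value outside `𝒰_t`). -/
noncomputable def psi (hn : 0 < n) (Φ : Formula n m k) (t : ℕ) (i : Fin m) : Fin n :=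
  let s := sInf {s | i ∈ curlyU Φ s}
  if h : (Finset.univ.filter
      (fun j : Fin k => (Φ i j).2 = true ∧ (Φ i j).1 ∉ (p1 Φ s).Z)).Nonempty then
    (Φ i ((Finset.univ.filter
      (fun j : Fin k => (Φ i j).2 = true ∧ (Φ i j).1 ∉ (p1 Φ s).Z)).min' h)).1
  else ((p1 Φ s).lastZ).getD ⟨0, hn⟩

/-- Clause `i` is `(Z,Z')`-endangered. -/
def endangered (Φ : Formula n m k) (Z Z' : Finset (Fin n)) (i : Fin m) : Prop :=
  ¬ ∃ j, litTrue (sigmaZ Z) (Φ i j) ∧ (Φ i j).1 ∉ Z'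

/-- A variable is `(Z,Z')`-unsafe. -/
def unsafeVar (Φ : Formula n m k) (Z Z' : Finset (Fin n)) (x : Fin n) : Prop :=
  x ∈ Z ∪ Z' ∨ ∃ i l, Φ i l = (x, true) ∧ ∀ j, j ≠ l →
    (((Φ i j).2 = true ∧ (Φ i j).1 ∈ Z ∪ Z') ∨ ((Φ i j).2 = false ∧ (Φ i j).1 ∉ Z))

/-- The Phase-2 while-loop with fuel. -/
noncomputable def p2go (Φ : Formula n m k) (Z : Finset (Fin n)) :
    ℕ → Finset (Fin n) → Finset (Fin n)
  | 0, Z' => Z'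
  | f + 1, Z' =>
    let Q := Finset.univ.filter (fun i : Fin m =>
      endangered Φ Z Z' i ∧
        (Finset.univ.filter (fun j => (Φ i j).1 ∈ Z')).card < 3)
    if hQ : Q.Nonempty then
      let i := Q.min' hQ
      let Ssafe := Finset.univ.filter (fun j : Fin k =>
        k1 k ≤ j.val ∧ j.val + 6 ≤ k ∧ ¬ unsafeVar Φ Z Z' ((Φ i j).1))
      let S := if 3 ≤ Ssafe.card then Ssafe
        else Finset.univ.filter (fun j : Fin k => k ≤ j.val + 5 ∧ (Φ i j).1 ∉ Z')
      p2go Φ Z f (Z' ∪ (((S.sort (· ≤ ·)).take 3).map (fun j => (Φ i j).1)).toFinset)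
    else Z'

/-- The set `Z'` produced by Phase 2. -/
noncomputable def p2 (Φ : Formula n m k) : Finset (Fin n) := p2go Φ (ZT Φ) m ∅

/-- `f` is a matching in the bipartite graph `G(Φ,Z,Z')` covering all
`(Z,Z')`-endangered clauses: it assigns to each endangered clause a variable of `Z'`
occurring in it, injectively on endangered clauses. -/
def coversEndangered (Φ : Formula n m k) (Z Z' : Finset (Fin n)) (f : Fin m → Fin n) : Prop :=
  (∀ i, endangered Φ Z Z' i → f i ∈ Z' ∧ ∃ j, (Φ i j).1 = f i) ∧
  ∀ i i', endangered Φ Z Z' i → endangered Φ Z Z' i' → f i = f i' → i = i'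

/-- The output of the algorithm `Fix` (Phase 3): the assignment `σ_{Z,Z',M}` if a
matching `M` covering all `(Z,Z')`-endangered clauses exists, `none` ("fail") otherwise. -/
noncomputable def fixOutput (Φ : Formula n m k) : Option (Fin n → Bool) :=
  if h : ∃ f : Fin m → Fin n, coversEndangered Φ (ZT Φ) (p2 Φ) f then
    some (fun x =>
      if x ∈ ZT Φ ∧ x ∉ p2 Φ then false
      else if ∃ i, endangered Φ (ZT Φ) (p2 Φ) i ∧ Classical.choose h i = x ∧
          ∃ j, Φ i j = (x, false) then false
      else true)
  else none

/-- The `σ`-algebra `F_t` generated by the equivalence classes of `≡_t`. -/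
noncomputable def Ft (n m k : ℕ) (t : ℕ) : MeasurableSpace (Formula n m k) :=
  MeasurableSpace.comap (fun Φ : Formula n m k => fun s : Fin (t + 1) => (p1 Φ s.val).pi) ⊤

/-- The `≡_t`-equivalence class of `Φ`. -/
noncomputable def cls (t : ℕ) (Φ : Formula n m k) : Finset (Formula n m k) :=
  Finset.univ.filter (fun Ψ => ∀ s ≤ t, (p1 Ψ s).pi = (p1 Φ s).pi)

/-- The set `E_t` of positions whose literal is not yet revealed at time `t`. -/
noncomputable def Et (Φ : Formula n m k) (t : ℕ) : Finset (Fin m × Fin k) :=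
  Finset.univ.filter (fun p => ∃ b, (p1 Φ t).pi p.1 p.2 = Sum.inl b)

/-- `ω = (1-ε) ln k`. -/
noncomputable def omOf (ε : ℝ) (k : ℕ) : ℝ := (1 - ε) * Real.log k

/-- `m = ⌊(1-ε) 2^k k⁻¹ (ln k) n⌋`. -/
noncomputable def mOf (ε : ℝ) (k n : ℕ) : ℕ := ⌊(1 - ε) * 2 ^ k * Real.log k / k * n⌋₊

/-- `θ = ⌊4 n k⁻¹ ln ω⌋`. -/
noncomputable def thetaOf (ε : ℝ) (k n : ℕ) : ℕ := ⌊4 * (n : ℝ) / k * Real.log (omOf ε k)⌋₊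

/-- The indicator random variable `B_t` of Corollary 9. -/
noncomputable def Bt (ε : ℝ) (n m k : ℕ) (t : ℕ) : Formula n m k → ℝ := fun Φ =>
  if t ≤ TT Φ ∧
      (∃ i, (p1 Φ t).lastPhi = some i ∧
        ∀ j : Fin k, j.val + 1 < k1 k → 0 < Ux Φ (p1 Φ (t - 1)).Z ((Φ i j).1)) ∧
      ((n : ℝ) * (k : ℝ) ^ (ε / 2 - 1) ≤
        ((Finset.univ.filter (fun x : Fin n =>
          x ∉ (p1 Φ (t - 1)).Z ∧ Ux Φ (p1 Φ (t - 1)).Z x = 0)).card : ℝ)) ∧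
      (((Uset Φ (p1 Φ t).Z).card : ℝ) ≤ (1 + ε / 3) * omOf ε k * n)
  then 1 else 0

/-- The indicator `H_{tij}`. -/
noncomputable def Hind (n m k : ℕ) (t : ℕ) (i : Fin m) (j : Fin k) : Formula n m k → ℝ :=
  fun Φ =>
  if (p1 Φ (t - 1)).pi i j = Sum.inl true ∧
      ∃ z, (p1 Φ t).lastZ = some z ∧ (p1 Φ t).pi i j = Sum.inr (z, true)
  then 1 else 0

/-- The indicator `S_{tij}`. -/
noncomputable def Sind (n m k : ℕ) (t : ℕ) (i : Fin m) (j : Fin k) : Formula n m k → ℝ :=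
  fun Φ => if t ≤ TT Φ ∧ ∃ b, (p1 Φ t).pi i j = Sum.inl b then 1 else 0


section BallsInBins

open Equiv Nat

variable {α ι : Type*} [Fintype α] [DecidableEq ι]

def load (f : α → ι) (b : ι) : ℕ := #{a | f a = b}

theorem load_eq_zero_iff {f : α → ι} {b : ι} : load f b = 0 ↔ ∀ a, f a ≠ b := by
  simp [load, filter_eq_empty_iff]

theorem sum_load [Fintype ι] (f : α → ι) : ∑ b, load f b = Fintype.card α :=
  (card_eq_sum_card_fiberwise fun a _ => mem_univ (f a)).symm

theorem exists_perm_comp_eq_of_load_eq {f g : α → ι} (h : load f = load g) :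
    ∃ σ : Perm α, f ∘ σ = g := by
  have e : ∀ b, {a // g a = b} ≃ {a // f a = b} := fun b =>
    Fintype.equivOfCardEq (by simpa [Fintype.card_subtype, load] using (congrFun h b).symm)
  exact ⟨Equiv.ofFiberEquiv e, funext (Equiv.ofFiberEquiv_map e)⟩

/- Orbit–stabilizer: `σ ↦ f₀ ∘ σ` maps the permutations onto the fiber of `v`, and every
point of the fiber is hit by a coset of the stabilizer of `f₀`, of size `∏ b, (v b)!`. -/
theorem card_load_eq_mul_prod_factorial_le [Fintype ι] [DecidableEq α] (v : ι → ℕ) :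
    #{f : α → ι | load f = v} * ∏ b, (v b)! ≤ (Fintype.card α)! := by
  obtain hempty | ⟨f₀, hf₀⟩ := ({f : α → ι | load f = v} : Finset _).eq_empty_or_nonempty
  · simp [hempty]
  have hv : load f₀ = v := (mem_filter.1 hf₀).2
  have hstab : #{τ : Perm α | f₀ ∘ τ = f₀} = ∏ b, (v b)! := by
    rw [← Fintype.card_subtype, DomMulAct.stabilizer_card, ← hv]
    simp [Fintype.card_subtype, load]
  rw [← hstab, ← Fintype.card_perm, mul_comm]
  refine (mul_card_image_le_card_of_maps_to (f := fun σ : Perm α => f₀ ∘ σ)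
    (s := {σ | f₀ ∘ σ ∈ ({f : α → ι | load f = v} : Finset _)}) (fun σ hσ => (mem_filter.1 hσ).2)
    _ fun g hg => ?_).trans (card_le_univ _)
  obtain ⟨σ, hσ⟩ := exists_perm_comp_eq_of_load_eq (hv.trans (mem_filter.1 hg).2.symm)
  refine card_le_card_of_injOn (· * σ) (fun τ hτ => ?_) (fun τ _ τ' _ h => mul_right_cancel h)
  have hτ' : f₀ ∘ (τ * σ : Perm α) = g := by
    rw [Perm.coe_mul, ← Function.comp_assoc, (mem_filter.1 hτ).2, hσ]
  exact mem_filter.2 ⟨mem_filter.2 ⟨mem_univ _, by rwa [hτ']⟩, hτ'⟩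

theorem sum_prod_load_le [Fintype ι] [DecidableEq α] {u : ℕ → ℝ} (hu : ∀ k, 0 ≤ u k) :
    ∑ f : α → ι, ∏ b, u (load f b) ≤
      (Fintype.card α)! * (∑ k ∈ range (Fintype.card α + 1), u k / k !) ^ Fintype.card ι := by
  set μ := Fintype.card α
  have hmaps : ∀ f ∈ (univ : Finset (α → ι)), load f ∈ Fintype.piFinset fun _ => range (μ + 1) :=
    fun f _ => Fintype.mem_piFinset.2 fun b => mem_range_succ_iff.2 (card_filter_le _ _)
  have hfiber (v : ι → ℕ) : (#{f : α → ι | load f = v} : ℝ) ≤ μ ! / ∏ b, ((v b)! : ℝ) := by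
    rw [le_div_iff₀ (by positivity)]
    exact_mod_cast card_load_eq_mul_prod_factorial_le v
  calc ∑ f : α → ι, ∏ b, u (load f b)
      = ∑ v ∈ Fintype.piFinset fun _ => range (μ + 1),
          #{f : α → ι | load f = v} * ∏ b, u (v b) := by
        rw [← sum_fiberwise_of_maps_to hmaps]
        refine sum_congr rfl fun v _ => ?_
        rw [← nsmul_eq_mul, ← sum_const]
        exact sum_congr rfl fun f hf => by rw [(mem_filter.1 hf).2]
    _ ≤ ∑ v ∈ Fintype.piFinset fun _ => range (μ + 1), (μ ! / ∏ b, ((v b)! : ℝ)) * ∏ b, u (v b) :=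
        sum_le_sum fun v _ => mul_le_mul_of_nonneg_right (hfiber v) (prod_nonneg fun b _ => hu _)
    _ = μ ! * (∑ k ∈ range (μ + 1), u k / k !) ^ Fintype.card ι := by
        rw [← Finset.card_univ, ← prod_const, prod_univ_sum, mul_sum]
        refine sum_congr rfl fun v _ => ?_
        rw [prod_div_distrib]
        ring

theorem sum_range_weight_le_exp_sub_half {c : ℝ} (hc : 0 ≤ c) (N : ℕ) :
    ∑ k ∈ range (N + 1), (if k = 0 then 2⁻¹ else 1) * c ^ k / k ! ≤ Real.exp c - 2⁻¹ := by
  have h := Real.sum_le_exp_of_nonneg hc (N + 1)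
  rw [sum_range_succ'] at h ⊢
  simp only [add_eq_zero, one_ne_zero, and_false, if_false, one_mul, if_true, pow_zero,
    factorial_zero, cast_one, div_one, mul_one] at h ⊢
  linarith

theorem sum_half_pow_card_empty_mul_le [Fintype ι] [DecidableEq α] {c : ℝ} (hc : 0 ≤ c) :
    (∑ f : α → ι, (2⁻¹ : ℝ) ^ #{b | ∀ a, f a ≠ b}) * c ^ Fintype.card α ≤
      (Fintype.card α)! * (Real.exp c - 2⁻¹) ^ Fintype.card ι := by
  have hprod (f : α → ι) : ∏ b, (if load f b = 0 then 2⁻¹ else 1) * c ^ load f b =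
      (2⁻¹ : ℝ) ^ #{b | ∀ a, f a ≠ b} * c ^ Fintype.card α := by
    rw [prod_mul_distrib, prod_ite, prod_const, prod_const_one, mul_one, prod_pow_eq_pow_sum,
      sum_load]
    simp_rw [load_eq_zero_iff]
  calc (∑ f : α → ι, (2⁻¹ : ℝ) ^ #{b | ∀ a, f a ≠ b}) * c ^ Fintype.card α
      = ∑ f : α → ι, ∏ b, (if load f b = 0 then 2⁻¹ else 1) * c ^ load f b := by
        simp_rw [sum_mul, hprod]
    _ ≤ (Fintype.card α)! * (∑ k ∈ range (Fintype.card α + 1),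
          (if k = 0 then 2⁻¹ else 1) * c ^ k / k !) ^ Fintype.card ι :=
        sum_prod_load_le (u := fun k => (if k = 0 then 2⁻¹ else 1) * c ^ k) fun k => by positivity
    _ ≤ _ := by
        gcongr
        exact sum_range_weight_le_exp_sub_half hc _

theorem card_filter_le_rpow_mul_sum {β : Type*} (s : Finset β) (g : β → ℕ) {r : ℝ} (hr : 1 ≤ r)
    (t : ℝ) : (#{x ∈ s | (g x : ℝ) ≤ t} : ℝ) ≤ r ^ t * ∑ x ∈ s, r⁻¹ ^ g x := by
  rw [mul_sum, card_eq_sum_ones, Nat.cast_sum, sum_filter]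
  refine sum_le_sum fun x _ => ?_
  split_ifs with h
  · rw [inv_pow, ← Real.rpow_natCast, ← div_eq_mul_inv, ← Real.rpow_sub (by linarith)]
    exact_mod_cast Real.one_le_rpow hr (sub_nonneg.2 h)
  · positivity

theorem exp_sub_half_pow_le {c : ℝ} (hc : 0 ≤ c) (n : ℕ) :
    (Real.exp c - 2⁻¹) ^ n ≤ Real.exp (n * c - n * Real.exp (-c) / 2) := by
  have hfactor : Real.exp c - 2⁻¹ = Real.exp c * (1 - Real.exp (-c) / 2) := by
    rw [mul_sub, ← mul_div_assoc, ← Real.exp_add, add_neg_cancel, Real.exp_zero]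
    ring
  have hbase : Real.exp c - 2⁻¹ ≤ Real.exp (c - Real.exp (-c) / 2) := by
    rw [hfactor, sub_eq_add_neg c, Real.exp_add]
    gcongr
    linarith [Real.add_one_le_exp (-(Real.exp (-c) / 2))]
  calc (Real.exp c - 2⁻¹) ^ n ≤ Real.exp (c - Real.exp (-c) / 2) ^ n :=
        pow_le_pow_left₀ (by linarith [Real.one_le_exp hc]) hbase n
    _ = Real.exp (n * c - n * Real.exp (-c) / 2) := by
        rw [← Real.exp_nat_mul]
        ring_nf

theorem factorial_mul_exp_le {μ : ℕ} (hμ : μ ≠ 0) :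
    (μ ! : ℝ) * Real.exp μ ≤ Real.exp 1 * √μ * μ ^ μ := by
  obtain ⟨m, rfl⟩ := exists_eq_add_one_of_ne_zero hμ
  have h : Stirling.stirlingSeq (m + 1) ≤ Stirling.stirlingSeq 1 :=
    Stirling.stirlingSeq'_antitone (Nat.zero_le m)
  rw [Stirling.stirlingSeq_one, Stirling.stirlingSeq,
    div_le_div_iff₀ (by positivity) (by positivity), Real.sqrt_mul zero_le_two, div_pow, ← Real.exp_nat_mul, mul_one] at h
  field_simp at h
  exact h

theorem two_rpow_mul_exp_neg_le {l : ℝ} (hl : 0 ≤ l) :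
    (2 : ℝ) ^ (l / 2) * Real.exp (-l / 2) ≤ Real.exp (-l / 8) := by
  rw [Real.rpow_def_of_pos two_pos, ← Real.exp_add, Real.exp_le_exp]
  nlinarith [Real.log_two_lt_d9]

theorem card_filter_card_empty_le (n μ : ℕ) (hn : 1 ≤ n) (hμ : 1 ≤ μ) :
    (#{f : Fin μ → Fin n | (#{b | ∀ a, f a ≠ b} : ℝ) ≤ n * Real.exp (-(μ : ℝ) / n) / 2} : ℝ) ≤
      Real.exp 1 * √μ * Real.exp (-(n * Real.exp (-(μ : ℝ) / n)) / 8) * n ^ μ := by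
  have hn0 : (0 : ℝ) < n := by exact_mod_cast hn
  set l : ℝ := n * Real.exp (-(μ : ℝ) / n) with hl
  set c : ℝ := μ / n with hc
  have hpow : (Real.exp c - 2⁻¹) ^ n ≤ Real.exp μ * Real.exp (-l / 2) := by
    rw [← Real.exp_add, hl, hc]
    convert exp_sub_half_pow_le (by positivity : (0 : ℝ) ≤ μ / n) n using 2
    field_simp
    ring
  have hsum : (∑ f : Fin μ → Fin n, (2⁻¹ : ℝ) ^ #{b | ∀ a, f a ≠ b}) * c ^ μ ≤
      μ ! * (Real.exp c - 2⁻¹) ^ n := by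
    convert sum_half_pow_card_empty_mul_le (α := Fin μ) (ι := Fin n) (by positivity : 0 ≤ c) <;>
      simp
  have key : (#{f : Fin μ → Fin n | (#{b | ∀ a, f a ≠ b} : ℝ) ≤ l / 2} : ℝ) * c ^ μ ≤
      Real.exp 1 * √μ * Real.exp (-l / 8) * μ ^ μ := calc
    _ ≤ 2 ^ (l / 2) * (∑ f : Fin μ → Fin n, (2⁻¹ : ℝ) ^ #{b | ∀ a, f a ≠ b}) * c ^ μ :=
        mul_le_mul_of_nonneg_right (card_filter_le_rpow_mul_sum univ
          (fun f : Fin μ → Fin n => #{b | ∀ a, f a ≠ b}) one_le_two (l / 2)) (by positivity)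
    _ ≤ 2 ^ (l / 2) * (μ ! * (Real.exp μ * Real.exp (-l / 2))) := by
        rw [mul_assoc]
        exact mul_le_mul_of_nonneg_left
          (hsum.trans (mul_le_mul_of_nonneg_left hpow (by positivity))) (by positivity)
    _ = 2 ^ (l / 2) * Real.exp (-l / 2) * (μ ! * Real.exp μ) := by ring
    _ ≤ Real.exp (-l / 8) * (Real.exp 1 * √μ * μ ^ μ) :=
        mul_le_mul (two_rpow_mul_exp_neg_le (by positivity)) (factorial_mul_exp_le (by omega))
          (by positivity) (by positivity)
    _ = _ := by ring
  rw [hc, div_pow, mul_div_assoc', div_le_iff₀ (by positivity)] at key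
  nlinarith [pow_pos (by exact_mod_cast hμ : (0 : ℝ) < μ) μ]

end BallsInBins

/-- Lemma 1, balls and bins.  There is an absolute constant `C > 0`
such that if `μ ≥ 1` balls are thrown independently and uniformly at random into
`n ≥ 1` bins and `Z(μ,n)` is the number of empty bins, then with `λ = n·exp(-μ/n)` one
has `P[Z(μ,n) ≤ λ/2] ≤ C √μ exp(-λ/8)`. -/
theorem statement1 :
    ∃ C : ℝ, 0 < C ∧ ∀ n μ : ℕ, 1 ≤ n → 1 ≤ μ →
      ((Finset.univ.filter (fun f : Fin μ → Fin n =>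
          ((Finset.univ.filter (fun b : Fin n => ∀ a, f a ≠ b)).card : ℝ)
            ≤ (n : ℝ) * Real.exp (-(μ : ℝ) / n) / 2)).card : ℝ)
        / ((Finset.univ : Finset (Fin μ → Fin n)).card : ℝ)
      ≤ C * Real.sqrt μ * Real.exp (-((n : ℝ) * Real.exp (-(μ : ℝ) / n)) / 8) := by
  refine ⟨Real.exp 1, Real.exp_pos 1, fun n μ hn hμ => ?_⟩
  rw [card_univ, Fintype.card_fun, Fintype.card_fin, Fintype.card_fin, Nat.cast_pow,
    div_le_iff₀ (by positivity)]
  exact card_filter_card_empty_le n μ hn hμ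

end RandomKSAT
end

section
/- For any δ > 0 and any k ≥ 3 there is n₀ > 0 such that for all n > n₀ the following is true. Suppose that m ≥ δn and that X_i : Ω_k(n,m) → {0,1} is a random variable for each i ∈ [m]. Let μ = ⌈ln² n⌉. If there is a number λ ≥ δ such that for every set M ⊆ [m] of size μ one has E[∏_{i∈M} X_i] ≤ λ^μ, then P[∑_{i=1}^m X_i ≥ (1+δ)λm] < n^{−10}. -/
open Finset MeasureTheory Filter
open scoped ENNReal

attribute [local instance] Classical.propDecidable

namespace RandomKSAT

variable {n m k : ℕ}

set_option maxHeartbeats 2000000 in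
/-- Lemma 2.  For any `δ > 0` and `k ≥ 3` there is `n₀` such that for
all `n > n₀`: if `m ≥ δn`, each `X_i : Ω_k(n,m) → {0,1}` is a random variable,
`μ = ⌈ln² n⌉`, and there is `λ ≥ δ` with `E[∏_{i∈M} X_i] ≤ λ^μ` for every `M ⊆ [m]` of
size `μ`, then `P[∑ X_i ≥ (1+δ)λm] < n⁻¹⁰`. -/
theorem statement2 (δ : ℝ) (hδ : 0 < δ) (k : ℕ) (hk : 3 ≤ k) :
    ∃ n₀ : ℕ, ∀ n : ℕ, n₀ < n → ∀ m : ℕ, δ * n ≤ (m : ℝ) →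
      ∀ X : Fin m → Formula n m k → ℝ,
        (∀ i Φ, X i Φ = 0 ∨ X i Φ = 1) →
      ∀ lam : ℝ, δ ≤ lam →
        (∀ M : Finset (Fin m), M.card = ⌈(Real.log n) ^ 2⌉₊ →
          EV n m k (fun Φ => ∏ i ∈ M, X i Φ) ≤ lam ^ (⌈(Real.log n) ^ 2⌉₊ : ℕ)) →
      Pr n m k {Φ : Formula n m k | (1 + δ) * lam * m ≤ ∑ i, X i Φ}
        < (((n : ℝ) ^ (10 : ℕ)))⁻¹ := by
  classical
  set c := min δ 1 with hcdef
  have hc0 : 0 < c := lt_min hδ one_pos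
  have hc1 : c ≤ 1 := min_le_right _ _
  have hcδ : c ≤ δ := min_le_left _ _
  set z := Real.log (1 + c / 2) with hzdef
  have hz : 0 < z := Real.log_pos (by linarith)
  set ε₀ := c / 2 * δ ^ 2 with hε₀def
  have hε₀0 : 0 < ε₀ := by positivity
  -- eventual conditions on n
  have h1 : ∀ᶠ x : ℝ in atTop, 10 < Real.log x * z := by
    filter_upwards [Real.tendsto_log_atTop.eventually_gt_atTop (11 / z)] with x hx
    have h := mul_lt_mul_of_pos_right hx hz
    rw [div_mul_cancel₀ _ (ne_of_gt hz)] at h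
    linarith
  have h2 : ∀ᶠ x : ℝ in atTop, (Real.log x) ^ 2 + 1 ≤ ε₀ * x := by
    have ht := Real.tendsto_pow_log_div_mul_add_atTop 1 0 2 one_ne_zero
    have h2a := ht.eventually (eventually_lt_nhds (by positivity : (0:ℝ) < ε₀ / 2))
    filter_upwards [h2a, eventually_ge_atTop (2 / ε₀), eventually_gt_atTop (0:ℝ)]
      with x hx hx2 hx0
    rw [one_mul, add_zero, div_lt_iff₀ hx0] at hx
    have he : ε₀ / 2 * (2 / ε₀) = 1 := by field_simp
    have h1' : (1:ℝ) ≤ ε₀ / 2 * x := by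
      calc (1:ℝ) = ε₀ / 2 * (2 / ε₀) := he.symm
        _ ≤ ε₀ / 2 * x := by
          apply mul_le_mul_of_nonneg_left hx2 (by positivity)
    linarith
  obtain ⟨n₀, hn₀⟩ := Filter.eventually_atTop.mp
    ((tendsto_natCast_atTop_atTop : Tendsto (Nat.cast : ℕ → ℝ) atTop atTop).eventually
      (h1.and h2))
  refine ⟨n₀, fun n hn m hm X hX lam hlam hE => ?_⟩
  obtain ⟨hA, hB⟩ := hn₀ n hn.le
  set L := Real.log (n : ℝ) with hLdef
  have hL : 0 < L := by
    by_contra h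
    push_neg at h
    nlinarith
  have hn1 : 1 < (n : ℝ) := by
    by_contra h
    push_neg at h
    exact absurd (Real.log_nonpos (by positivity) h) (not_le.mpr hL)
  have hnpos : (0:ℝ) < n := by linarith
  have hlampos : 0 < lam := lt_of_lt_of_le hδ hlam
  have hmpos : (0:ℝ) < m := lt_of_lt_of_le (by positivity) hm
  set μ := ⌈L ^ 2⌉₊ with hμdef
  have hμle : (μ : ℝ) ≤ L ^ 2 + 1 := (Nat.ceil_lt_add_one (by positivity)).le
  have hμge : L ^ 2 ≤ (μ : ℝ) := Nat.le_ceil _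
  have hlm : δ ^ 2 * n ≤ lam * m := by
    have h1' : δ * (m:ℝ) ≤ lam * m := mul_le_mul_of_nonneg_right hlam hmpos.le
    have h2' : δ * (δ * n) ≤ δ * m := mul_le_mul_of_nonneg_left hm hδ.le
    nlinarith
  have hμlam : (μ : ℝ) ≤ c / 2 * (lam * m) := by
    have : c / 2 * (δ ^ 2 * (n:ℝ)) ≤ c / 2 * (lam * m) :=
      mul_le_mul_of_nonneg_left hlm (by positivity)
    calc (μ:ℝ) ≤ L ^ 2 + 1 := hμle
      _ ≤ ε₀ * n := hB
      _ = c / 2 * (δ ^ 2 * n) := by ring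
      _ ≤ c / 2 * (lam * m) := this
  have hlmpos : 0 < lam * m := mul_pos hlampos hmpos
  have hμlam' : (μ : ℝ) ≤ lam * m := by nlinarith
  set s₀ := ⌈(1 + δ) * lam * m⌉₊ with hs₀def
  have hs₀ : (1 + δ) * lam * m ≤ (s₀ : ℝ) := Nat.le_ceil _
  have hμs₀ : μ ≤ s₀ := by
    have : (μ : ℝ) ≤ (s₀ : ℝ) := by nlinarith
    exact_mod_cast this
  -- the uniform space
  haveI : Nonempty (Fin n) := ⟨⟨0, by exact_mod_cast hnpos⟩⟩
  set N := Fintype.card (Formula n m k) with hNdef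
  have hN : 0 < N := Fintype.card_pos
  have hN' : (0:ℝ) < N := by exact_mod_cast hN
  set A : Formula n m k → Finset (Fin m) :=
    fun Φ => Finset.univ.filter (fun i => X i Φ = 1) with hAdef
  have hsum : ∀ Φ, ∑ i, X i Φ = ((A Φ).card : ℝ) := by
    intro Φ
    rw [hAdef, Finset.card_filter]
    push_cast
    refine Finset.sum_congr rfl fun i _ => ?_
    rcases hX i Φ with h | h <;> simp [h]
  have hprod : ∀ (Φ : Formula n m k) (M : Finset (Fin m)),
      (∏ i ∈ M, X i Φ) = if M ⊆ A Φ then (1:ℝ) else 0 := by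
    intro Φ M
    by_cases h : M ⊆ A Φ
    · rw [if_pos h]
      refine Finset.prod_eq_one fun i hi => ?_
      have := h hi
      simp only [hAdef, Finset.mem_filter] at this
      exact this.2
    · rw [if_neg h]
      obtain ⟨i, hiM, hiA⟩ := Finset.not_subset.mp h
      refine Finset.prod_eq_zero hiM ?_
      rcases hX i Φ with h0 | h1
      · exact h0
      · exact absurd (Finset.mem_filter.mpr ⟨Finset.mem_univ i, h1⟩) hiA
  have hcount : ∀ Φ : Formula n m k,
      (∑ M ∈ Finset.powersetCard μ (Finset.univ : Finset (Fin m)), ∏ i ∈ M, X i Φ)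
        = ((A Φ).card.choose μ : ℝ) := by
    intro Φ
    rw [Finset.sum_congr rfl fun M _ => hprod Φ M, Finset.sum_boole]
    have hfil : (Finset.powersetCard μ (Finset.univ : Finset (Fin m))).filter
        (fun M => M ⊆ A Φ) = Finset.powersetCard μ (A Φ) := by
      ext M
      simp only [Finset.mem_filter, Finset.mem_powersetCard, Finset.subset_univ,
        true_and]
      tauto
    rw [hfil, Finset.card_powersetCard]
  have hglobal : (∑ Φ : Formula n m k, ((A Φ).card.choose μ : ℝ))
      ≤ (m.choose μ : ℝ) * (lam ^ μ * N) := by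
    calc (∑ Φ : Formula n m k, ((A Φ).card.choose μ : ℝ))
        = ∑ Φ : Formula n m k,
            ∑ M ∈ Finset.powersetCard μ (Finset.univ : Finset (Fin m)),
              ∏ i ∈ M, X i Φ := by
          exact Finset.sum_congr rfl fun Φ _ => (hcount Φ).symm
      _ = ∑ M ∈ Finset.powersetCard μ (Finset.univ : Finset (Fin m)),
            ∑ Φ : Formula n m k, ∏ i ∈ M, X i Φ := Finset.sum_comm
      _ ≤ ∑ M ∈ Finset.powersetCard μ (Finset.univ : Finset (Fin m)),
            (lam ^ μ * N) := by
          refine Finset.sum_le_sum fun M hM => ?_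
          have hMcard : M.card = μ := (Finset.mem_powersetCard.mp hM).2
          have hEV := hE M hMcard
          simp only [EV] at hEV
          rw [div_le_iff₀ hN'] at hEV
          exact hEV
      _ = (m.choose μ : ℝ) * (lam ^ μ * N) := by
          rw [Finset.sum_const, Finset.card_powersetCard, Finset.card_univ,
            Fintype.card_fin, nsmul_eq_mul]
  set B : Finset (Formula n m k) :=
    Finset.univ.filter (fun Φ => (1 + δ) * lam * m ≤ ∑ i, X i Φ) with hBdef
  have hbadle : (B.card : ℝ) * (s₀.choose μ : ℝ)
      ≤ ∑ Φ : Formula n m k, ((A Φ).card.choose μ : ℝ) := by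
    calc (B.card : ℝ) * (s₀.choose μ : ℝ)
        = ∑ _Φ ∈ B, (s₀.choose μ : ℝ) := by rw [Finset.sum_const, nsmul_eq_mul]
      _ ≤ ∑ Φ ∈ B, ((A Φ).card.choose μ : ℝ) := by
          refine Finset.sum_le_sum fun Φ hΦ => ?_
          have hge : (1 + δ) * lam * m ≤ ∑ i, X i Φ := (Finset.mem_filter.mp hΦ).2
          rw [hsum Φ] at hge
          have : s₀ ≤ (A Φ).card := Nat.ceil_le.mpr hge
          exact_mod_cast Nat.choose_le_choose μ this
      _ ≤ ∑ Φ : Formula n m k, ((A Φ).card.choose μ : ℝ) :=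
          Finset.sum_le_sum_of_subset_of_nonneg (Finset.subset_univ _)
            (fun _ _ _ => by positivity)
  have hchoosepos : (0:ℝ) < (s₀.choose μ : ℝ) := by
    exact_mod_cast Nat.choose_pos hμs₀
  have hPr : Pr n m k {Φ : Formula n m k | (1 + δ) * lam * m ≤ ∑ i, X i Φ}
      = (B.card : ℝ) / N := by
    have hsetfil : (Finset.univ.filter (fun Φ : Formula n m k =>
        Φ ∈ {Φ : Formula n m k | (1 + δ) * lam * m ≤ ∑ i, X i Φ})) = B := by
      rw [hBdef]
      exact Finset.filter_congr fun Φ _ => by simp [Set.mem_setOf_eq]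
    unfold Pr
    rw [hsetfil, Finset.card_univ]
  have hq1 : (B.card : ℝ) / N ≤ (m.choose μ : ℝ) * lam ^ μ / (s₀.choose μ : ℝ) := by
    rw [div_le_div_iff₀ hN' hchoosepos]
    calc (B.card : ℝ) * (s₀.choose μ : ℝ)
        ≤ ∑ Φ : Formula n m k, ((A Φ).card.choose μ : ℝ) := hbadle
      _ ≤ (m.choose μ : ℝ) * (lam ^ μ * N) := hglobal
      _ = (m.choose μ : ℝ) * lam ^ μ * N := by ring
  -- descFactorial bounds
  have hd1 : (m.choose μ : ℝ) * (μ.factorial : ℝ) ≤ (m : ℝ) ^ μ := by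
    have h := Nat.descFactorial_le_pow m μ
    rw [Nat.descFactorial_eq_factorial_mul_choose, Nat.mul_comm] at h
    exact_mod_cast h
  set r : ℝ := ((s₀ + 1 - μ : ℕ) : ℝ) with hrdef
  have hd2 : r ^ μ ≤ (s₀.choose μ : ℝ) * (μ.factorial : ℝ) := by
    have h := Nat.pow_sub_le_descFactorial s₀ μ
    rw [Nat.descFactorial_eq_factorial_mul_choose, Nat.mul_comm] at h
    rw [hrdef]
    exact_mod_cast h
  have hrcast : r = (s₀ : ℝ) + 1 - (μ : ℝ) := by
    rw [hrdef, Nat.cast_sub (hμs₀.trans (Nat.le_succ _))]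
    push_cast
    ring
  have hrge : (1 + c / 2) * (lam * m) ≤ r := by
    rw [hrcast]
    have hδc : 0 ≤ (δ - c) * (lam * m) := mul_nonneg (by linarith) hlmpos.le
    have e1 : (1 + c / 2) * (lam * m)
        = (1 + δ) * lam * m - (δ - c) * (lam * m) - c / 2 * (lam * m) := by ring
    linarith [hs₀, hδc, hμlam]
  have hrpos : 0 < r := lt_of_lt_of_le (by positivity) hrge
  have hF : (0:ℝ) < (μ.factorial : ℝ) := by
    exact_mod_cast μ.factorial_pos
  have hq2 : (m.choose μ : ℝ) * lam ^ μ / (s₀.choose μ : ℝ)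
      ≤ (lam * m) ^ μ / r ^ μ := by
    rw [div_le_div_iff₀ hchoosepos (by positivity)]
    have key : (m.choose μ : ℝ) * lam ^ μ * r ^ μ * (μ.factorial : ℝ)
        ≤ (lam * m) ^ μ * (s₀.choose μ : ℝ) * (μ.factorial : ℝ) := by
      calc (m.choose μ : ℝ) * lam ^ μ * r ^ μ * (μ.factorial : ℝ)
          = ((m.choose μ : ℝ) * (μ.factorial : ℝ)) * (lam ^ μ * r ^ μ) := by ring
        _ ≤ (m : ℝ) ^ μ * (lam ^ μ * r ^ μ) :=
            mul_le_mul_of_nonneg_right hd1 (by positivity)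
        _ = ((m : ℝ) ^ μ * lam ^ μ) * r ^ μ := by ring
        _ ≤ ((m : ℝ) ^ μ * lam ^ μ) * ((s₀.choose μ : ℝ) * (μ.factorial : ℝ)) :=
            mul_le_mul_of_nonneg_left hd2 (by positivity)
        _ = (lam * m) ^ μ * (s₀.choose μ : ℝ) * (μ.factorial : ℝ) := by
            rw [mul_pow]; ring
    exact le_of_mul_le_mul_right key hF
  have hq3 : (lam * m) ^ μ / r ^ μ ≤ ((1 + c / 2) ^ μ)⁻¹ := by
    have hple : ((1 + c / 2) * (lam * m)) ^ μ ≤ r ^ μ :=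
      pow_le_pow_left₀ (by positivity) hrge μ
    have hstep : (lam * m) ^ μ / r ^ μ ≤ (lam * m) ^ μ / ((1 + c / 2) * (lam * m)) ^ μ := by
      apply div_le_div_of_nonneg_left (by positivity) (by positivity) hple
    have heq : (lam * m) ^ μ / ((1 + c / 2) * (lam * m)) ^ μ = ((1 + c / 2) ^ μ)⁻¹ := by
      rw [mul_pow (1 + c / 2) (lam * (m:ℝ)), div_mul_eq_div_div_swap,
        div_self (pow_pos hlmpos μ).ne', one_div]
    rw [heq] at hstep
    exact hstep
  have hq4 : ((1 + c / 2) ^ μ)⁻¹ < (((n : ℝ) ^ (10 : ℕ)))⁻¹ := by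
    have hlt : (n : ℝ) ^ (10 : ℕ) < (1 + c / 2) ^ μ := by
      rw [← Real.exp_log (pow_pos hnpos 10), ← Real.exp_log (pow_pos (by positivity) μ),
        Real.log_pow, Real.log_pow]
      apply Real.exp_lt_exp.mpr
      have h10 : ((10 : ℕ) : ℝ) * L < (μ : ℝ) * z := by
        push_cast
        nlinarith
      exact h10
    exact inv_strictAnti₀ (by positivity) hlt
  calc Pr n m k {Φ : Formula n m k | (1 + δ) * lam * m ≤ ∑ i, X i Φ}
      = (B.card : ℝ) / N := hPr
    _ ≤ (m.choose μ : ℝ) * lam ^ μ / (s₀.choose μ : ℝ) := hq1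
    _ ≤ (lam * m) ^ μ / r ^ μ := hq2
    _ ≤ ((1 + c / 2) ^ μ)⁻¹ := hq3
    _ < (((n : ℝ) ^ (10 : ℕ)))⁻¹ := hq4

end RandomKSAT
end

section
/- There is an absolute constant α > 0 such that for all k ≥ 3 and all m, n with m/n ≤ 2^k k^{−1} ln k the following is true. Let 1 ≤ l ≤ √k be an integer and set δ = α·k^{−4l}. For a set Z ⊆ V let X_Z be the number of indices i ∈ [m] such that Φ_i is a clause with exactly l positive literals which contains a variable from Z. Then whp max{ X_Z : Z ⊆ V, |Z| ≤ δn } ≤ √δ·n. -/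
open Finset MeasureTheory Filter
open scoped ENNReal

attribute [local instance] Classical.propDecidable

namespace RandomKSAT

variable {n m k : ℕ}

/-!
A first-moment argument. Fix `Z` with `|Z| ≤ δn`. A uniformly random clause has exactly `l`
positive literals and meets `Z` with probability at most `p = k^l · k · δ / 2^k`, so Markov's
inequality for `2 ^ X_Z` gives `P(X_Z > √δ n) ≤ (1 + p)^m 2^{-√δ n} ≤ exp(pm - √δ n ln 2)`.
There are at most `δ^{-δn} (1 + δ)^n ≤ exp(δn (1 - ln δ))` sets `Z` with `|Z| ≤ δn`, and for
`δ = 10⁻⁴ k^{-4l}`, `m ≤ 2^k k⁻¹ ln k · n` the union bound is at most `exp(-√δ n / 2)`.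
-/

open Real

section Counting

variable {ι α C : Type*} [Fintype ι] [DecidableEq ι] [Fintype α] [Fintype C]

theorem card_bool_fun_card_true_le (l : ℕ) :
    #{s : ι → Bool | #{j | s j = true} = l} ≤ Fintype.card ι ^ l := by
  calc #{s : ι → Bool | #{j | s j = true} = l}
      ≤ #(powersetCard l (univ : Finset ι)) := by
        refine card_le_card_of_injOn (fun s => ({j | s j = true} : Finset ι)) ?_ ?_
        · intro s hs
          simpa [mem_powersetCard] using hs
        · intro s _ t _ hst
          funext j
          simpa using congrArg (j ∈ ·) hst
    _ = (Fintype.card ι).choose l := by simp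
    _ ≤ Fintype.card ι ^ l := Nat.choose_le_pow _ _

theorem card_fun_exists_mem_le [DecidableEq α] (Z : Finset α) :
    #{v : ι → α | ∃ j, v j ∈ Z} ≤
      Fintype.card ι * (#Z * Fintype.card α ^ (Fintype.card ι - 1)) := by
  have hsub : ({v : ι → α | ∃ j, v j ∈ Z} : Finset _) ⊆
      univ.biUnion fun j =>
        Fintype.piFinset (Function.update (fun _ : ι => (univ : Finset α)) j Z) := by
    intro v hv
    obtain ⟨j, hj⟩ := (mem_filter.mp hv).2
    simp only [mem_biUnion, mem_univ, true_and, Fintype.mem_piFinset]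
    refine ⟨j, fun i => ?_⟩
    rcases eq_or_ne i j with rfl | hij
    · simpa using hj
    · simp [hij]
  calc #{v : ι → α | ∃ j, v j ∈ Z}
      ≤ ∑ j, #(Fintype.piFinset (Function.update (fun _ : ι => (univ : Finset α)) j Z)) :=
        (card_le_card hsub).trans card_biUnion_le
    _ = ∑ _j : ι, #Z * Fintype.card α ^ (Fintype.card ι - 1) := by
        refine sum_congr rfl fun j _ => ?_
        rw [Fintype.card_piFinset]
        simp only [Function.apply_update (fun _ (s : Finset α) => #s)]
        rw [prod_update_of_mem (mem_univ j)]
        simp [card_univ_sdiff]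
    _ = _ := by simp

theorem card_many_hits_mul_two_rpow_le (B : Finset C) (m : ℕ) (t : ℝ) :
    (#{Φ : Fin m → C | t < #{i | Φ i ∈ B}} : ℝ) * 2 ^ t ≤ (Fintype.card C + #B) ^ m := by
  have hmgf : ∑ Φ : Fin m → C, (2 : ℝ) ^ #{i | Φ i ∈ B} = (Fintype.card C + #B) ^ m := by
    have hweight : ∀ Φ : Fin m → C,
        (2 : ℝ) ^ #{i | Φ i ∈ B} = ∏ i, if Φ i ∈ B then 2 else 1 := by
      intro Φ
      rw [prod_ite, prod_const_one, mul_one, prod_const]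
    have hsum : ∑ c : C, (if c ∈ B then (2 : ℝ) else 1) = Fintype.card C + #B := by
      have hcompl := card_compl_add_card B
      simp only [sum_ite, sum_const, ← compl_filter, filter_univ_mem, nsmul_eq_mul]
      rw [← hcompl]
      push_cast
      ring
    simp_rw [hweight]
    rw [← Fintype.prod_sum (fun (_ : Fin m) (c : C) => if c ∈ B then (2 : ℝ) else 1), hsum,
      prod_const, card_univ, Fintype.card_fin]
  calc (#{Φ : Fin m → C | t < #{i | Φ i ∈ B}} : ℝ) * 2 ^ t
      = ∑ Φ : Fin m → C with t < #{i | Φ i ∈ B}, (2 : ℝ) ^ t := by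
        rw [sum_const, nsmul_eq_mul]
    _ ≤ ∑ Φ : Fin m → C with t < #{i | Φ i ∈ B}, (2 : ℝ) ^ #{i | Φ i ∈ B} := by
        refine sum_le_sum fun Φ hΦ => ?_
        rw [← rpow_natCast]
        exact rpow_le_rpow_of_exponent_le one_le_two (mem_filter.mp hΦ).2.le
    _ ≤ ∑ Φ : Fin m → C, (2 : ℝ) ^ #{i | Φ i ∈ B} :=
        sum_le_sum_of_subset_of_nonneg (filter_subset _ _) fun _ _ _ => by positivity
    _ = _ := hmgf

theorem card_exists_many_hits_le {κ : Type*} (S : Finset κ) (B : κ → Finset C) (m : ℕ)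
    (t : ℝ) {p : ℝ} (hp : 0 ≤ p) (hB : ∀ Z ∈ S, (#(B Z) : ℝ) ≤ p * Fintype.card C) :
    (#{Φ : Fin m → C | ∃ Z ∈ S, t < #{i | Φ i ∈ B Z}} : ℝ)
      ≤ #S * exp (p * m - t * log 2) * Fintype.card C ^ m := by
  have hsingle : ∀ Z ∈ S, (#{Φ : Fin m → C | t < #{i | Φ i ∈ B Z}} : ℝ)
      ≤ exp (p * m - t * log 2) * Fintype.card C ^ m := by
    intro Z hZS
    have hbase : (Fintype.card C + #(B Z) : ℝ) ^ m ≤ exp (p * m) * Fintype.card C ^ m := by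
      calc (Fintype.card C + #(B Z) : ℝ) ^ m ≤ (Fintype.card C * (1 + p)) ^ m := by
            gcongr
            linarith [hB Z hZS]
        _ ≤ (Fintype.card C * exp p) ^ m := by
            gcongr
            linarith [add_one_le_exp p]
        _ = exp (p * m) * Fintype.card C ^ m := by
            rw [mul_pow, ← exp_nat_mul, mul_comm, mul_comm p]
    have h2t : (2 : ℝ) ^ t = exp (t * log 2) := by
      rw [rpow_def_of_pos two_pos, mul_comm]
    have hmarkov := (card_many_hits_mul_two_rpow_le (B Z) m t).trans hbase
    rw [h2t, ← le_div_iff₀ (exp_pos _)] at hmarkov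
    rwa [sub_eq_add_neg, exp_add, exp_neg, mul_right_comm, ← div_eq_mul_inv]
  calc (#{Φ : Fin m → C | ∃ Z ∈ S, t < #{i | Φ i ∈ B Z}} : ℝ)
      ≤ ∑ Z ∈ S, (#{Φ : Fin m → C | t < #{i | Φ i ∈ B Z}} : ℝ) := by
        have hsub : ({Φ : Fin m → C | ∃ Z ∈ S, t < #{i | Φ i ∈ B Z}} : Finset _) ⊆
            S.biUnion fun Z => {Φ : Fin m → C | t < #{i | Φ i ∈ B Z}} := by
          intro Φ hΦ
          simpa using hΦ
        exact_mod_cast (card_le_card hsub).trans card_biUnion_le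
    _ ≤ ∑ _Z ∈ S, exp (p * m - t * log 2) * Fintype.card C ^ m := sum_le_sum hsingle
    _ = _ := by rw [sum_const, nsmul_eq_mul, mul_assoc]

theorem card_finset_card_le_mul_le_exp (δ : ℝ) (hδ0 : 0 < δ) (hδ1 : δ ≤ 1) :
    (#{Z : Finset α | (#Z : ℝ) ≤ δ * Fintype.card α} : ℝ)
      ≤ exp (δ * Fintype.card α * (1 - log δ)) := by
  set s := δ * Fintype.card α
  have hsum :
      (#{Z : Finset α | (#Z : ℝ) ≤ s} : ℝ) * δ ^ s ≤ (δ + 1) ^ Fintype.card α := by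
    calc (#{Z : Finset α | (#Z : ℝ) ≤ s} : ℝ) * δ ^ s
        = ∑ Z : Finset α with (#Z : ℝ) ≤ s, δ ^ s := by rw [sum_const, nsmul_eq_mul]
      _ ≤ ∑ Z : Finset α with (#Z : ℝ) ≤ s, δ ^ #Z := by
          refine sum_le_sum fun Z hZ => ?_
          rw [← rpow_natCast]
          exact rpow_le_rpow_of_exponent_ge hδ0 hδ1 (mem_filter.mp hZ).2
      _ ≤ ∑ Z : Finset α, δ ^ #Z * 1 ^ (#(univ : Finset α) - #Z) := by
          simp only [one_pow, mul_one]
          exact sum_le_sum_of_subset_of_nonneg (filter_subset _ _) fun _ _ _ => by positivity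
      _ = (δ + 1) ^ Fintype.card α := by
          rw [← powerset_univ, sum_pow_mul_eq_add_pow, card_univ]
  have hexp : (δ + 1) ^ Fintype.card α ≤ exp s := by
    calc (δ + 1) ^ Fintype.card α ≤ exp δ ^ Fintype.card α := by
          gcongr
          exact add_one_le_exp δ
      _ = exp s := by rw [← exp_nat_mul, mul_comm]
  have hpow : δ ^ s = exp (s * log δ) := by rw [rpow_def_of_pos hδ0, mul_comm]
  rw [hpow, ← le_div_iff₀ (exp_pos _)] at hsum
  calc _ ≤ _ := hsum
    _ ≤ exp s / exp (s * log δ) := by gcongr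
    _ = exp (s * (1 - log δ)) := by rw [← exp_sub]; ring_nf

end Counting

def meetingClauses (l : ℕ) (Z : Finset (Fin n)) : Finset (Fin k → Lit n) :=
  {c | #{j | (c j).2 = true} = l ∧ ∃ j, (c j).1 ∈ Z}

theorem card_meetingClauses_le (l : ℕ) (Z : Finset (Fin n)) :
    #(meetingClauses (k := k) l Z) ≤ k ^ l * (k * (#Z * n ^ (k - 1))) := by
  calc #(meetingClauses (k := k) l Z)
      ≤ #(({s : Fin k → Bool | #{j | s j = true} = l} : Finset _) ×ˢ
          ({v : Fin k → Fin n | ∃ j, v j ∈ Z} : Finset _)) := by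
        refine card_le_card_of_injOn (fun c => (fun j => (c j).2, fun j => (c j).1)) ?_ ?_
        · intro c hc
          simpa [meetingClauses] using hc
        · intro c _ d _ hcd
          funext j
          simp only [Prod.mk.injEq] at hcd
          exact Prod.ext (congrFun hcd.2 j) (congrFun hcd.1 j)
    _ ≤ k ^ l * (k * (#Z * n ^ (k - 1))) := by
        rw [card_product]
        have h1 := card_bool_fun_card_true_le (ι := Fin k) l
        have h2 := card_fun_exists_mem_le (ι := Fin k) Z
        simp only [Fintype.card_fin] at h1 h2
        -- the filters on both sides differ only in their `Decidable` instances
        convert Nat.mul_le_mul h1 h2 using 4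

theorem Pr_eq_one_sub_Pr_compl [Nonempty (Formula n m k)] (A : Set (Formula n m k)) :
    Pr n m k A = 1 - Pr n m k Aᶜ := by
  have hsplit := card_filter_add_card_filter_not (s := (univ : Finset (Formula n m k))) (· ∈ A)
  have hpos : (0 : ℝ) < #(univ : Finset (Formula n m k)) := by
    exact_mod_cast card_pos.mpr univ_nonempty
  rw [Pr, Pr, eq_sub_iff_add_eq, ← add_div, div_eq_one_iff_eq hpos.ne']
  simp only [Set.mem_compl_iff]
  exact_mod_cast hsplit

theorem union_bound_exponent_le {K q : ℝ} (hK : 3 ≤ K) (hq : q = 1 / (100 * K ^ 2)) :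
    q ^ 2 * (1 - log (q ^ 2)) + K ^ 2 * q ^ 2 - q * log 2 ≤ -(q / 2) := by
  have hK0 : 0 < K := by linarith
  have hq0 : 0 < q := by rw [hq]; positivity
  have hqK : q * (100 * K ^ 2) = 1 := by rw [hq]; field_simp
  have hq900 : q ≤ 1 / 900 := by
    nlinarith [mul_le_mul_of_nonneg_left (show 900 ≤ 100 * K ^ 2 by nlinarith) hq0.le]
  have hlog : -log (q ^ 2) ≤ 40 * K := by
    have hinv : q ^ 2 = ((10 * K) ^ 4)⁻¹ := by rw [hq]; field_simp; ring
    rw [hinv, log_inv, neg_neg, log_pow]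
    have hlog10K := log_le_sub_one_of_pos (show 0 < 10 * K by positivity)
    push_cast
    linarith
  have hKq : 40 * K * q ≤ 2 / 15 := by nlinarith
  have hlog2 := log_two_gt_d9
  nlinarith [mul_le_mul_of_nonneg_left hlog (sq_nonneg q)]

-- `√δ` for `α = 10⁻⁴`, i.e. `α / k ^ (4 * l) = sqrtDelta k l ^ 2`.
noncomputable def sqrtDelta (k l : ℕ) : ℝ := 1 / (100 * ((k : ℝ) ^ l) ^ 2)

theorem Pr_exists_small_set_many_meeting_le {l : ℕ} (hk : 3 ≤ k) (hl : 1 ≤ l)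
    (hm : (m : ℝ) ≤ 2 ^ k * log k / k * n) :
    Pr n m k {Φ | ∃ Z : Finset (Fin n), (#Z : ℝ) ≤ sqrtDelta k l ^ 2 * n ∧
        sqrtDelta k l * n < #{i | Φ i ∈ meetingClauses l Z}}
      ≤ exp (-(sqrtDelta k l / 2) * n) := by
  set q := sqrtDelta k l
  set K : ℝ := (k : ℝ) ^ l
  have hk0 : (0 : ℝ) < k := by exact_mod_cast (show 0 < k by omega)
  have hkK : (k : ℝ) ≤ K :=
    le_self_pow₀ (by exact_mod_cast (show 1 ≤ k by omega)) (by omega)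
  have hK3 : 3 ≤ K := le_trans (by exact_mod_cast hk) hkK
  have hq : q = 1 / (100 * K ^ 2) := rfl
  have hq0 : 0 < q := by rw [hq]; positivity
  have hq1 : q ^ 2 ≤ 1 := by
    refine pow_le_one₀ hq0.le ?_
    rw [hq, div_le_one (by positivity)]
    nlinarith
  set S : Finset (Finset (Fin n)) := {Z | (#Z : ℝ) ≤ q ^ 2 * n}
  set p : ℝ := K * k * q ^ 2 / 2 ^ k with hp
  have hcardC : (Fintype.card (Fin k → Lit n) : ℝ) = (2 * n) ^ k := by
    simp [mul_comm]
  have hB : ∀ Z ∈ S,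
      (#(meetingClauses (k := k) l Z) : ℝ) ≤ p * Fintype.card (Fin k → Lit n) := by
    intro Z hZ
    have hZ' : (#Z : ℝ) ≤ q ^ 2 * n := by simpa [S] using hZ
    have hnk : (n : ℝ) ^ (k - 1) * n = (n : ℝ) ^ k := by
      rw [← pow_succ, Nat.sub_add_cancel (by omega)]
    calc (#(meetingClauses (k := k) l Z) : ℝ) ≤ (k : ℝ) ^ l * (k * (#Z * n ^ (k - 1))) := by
          exact_mod_cast card_meetingClauses_le (k := k) l Z
      _ ≤ K * (k * (q ^ 2 * n * n ^ (k - 1))) := by gcongr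
      _ = p * Fintype.card (Fin k → Lit n) := by
          rw [hcardC, hp, mul_pow, mul_assoc (q ^ 2), mul_comm (n : ℝ), hnk]
          field_simp
  have hbad := card_exists_many_hits_le S (meetingClauses (k := k) l) m (q * n) (by positivity) hB
  have hsmall : (#S : ℝ) ≤ exp (q ^ 2 * n * (1 - log (q ^ 2))) := by
    simpa [S] using card_finset_card_le_mul_le_exp (α := Fin n) (q ^ 2) (by positivity) hq1
  have hpm : p * m ≤ K ^ 2 * q ^ 2 * n := by
    have hlog : log k ≤ K := (log_le_sub_one_of_pos hk0).trans (by linarith)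
    calc p * m ≤ p * (2 ^ k * log k / k * n) := by gcongr
      _ = K * q ^ 2 * n * log k := by
          rw [hp]
          field_simp
      _ ≤ K * q ^ 2 * n * K := by gcongr
      _ = K ^ 2 * q ^ 2 * n := by ring
  have hcardF : (#(univ : Finset (Formula n m k)) : ℝ) = Fintype.card (Fin k → Lit n) ^ m := by
    rw [card_univ, Fintype.card_fun, Fintype.card_fin]
    push_cast
    rfl
  refine div_le_of_le_mul₀ (by positivity) (exp_pos _).le ?_
  calc _ ≤ (#S : ℝ) * exp (p * m - q * n * log 2) * Fintype.card (Fin k → Lit n) ^ m := by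
        convert hbad using 4
        simp only [S, Set.mem_ofPred_eq, mem_filter, mem_univ, true_and]
        congr!
    _ ≤ exp (q ^ 2 * n * (1 - log (q ^ 2))) * exp (K ^ 2 * q ^ 2 * n - q * n * log 2)
          * Fintype.card (Fin k → Lit n) ^ m := by
        refine mul_le_mul_of_nonneg_right ?_ (by positivity)
        rw [mul_assoc q]
        exact mul_le_mul hsmall (exp_le_exp.2 (by linarith)) (exp_pos _).le (exp_pos _).le
    _ = exp (n * (q ^ 2 * (1 - log (q ^ 2)) + K ^ 2 * q ^ 2 - q * log 2))
          * Fintype.card (Fin k → Lit n) ^ m := by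
        rw [← exp_add]
        ring_nf
    _ ≤ exp (-(q / 2) * n) * #(univ : Finset (Formula n m k)) := by
        rw [hcardF]
        refine mul_le_mul_of_nonneg_right (exp_le_exp.2 ?_) (by positivity)
        nlinarith [mul_le_mul_of_nonneg_left (union_bound_exponent_le hK3 hq)
          (Nat.cast_nonneg (α := ℝ) n)]

/-- Lemma 6.  There is an absolute `α > 0` such that for all `k ≥ 3`
and densities `m/n ≤ 2^k k⁻¹ ln k`, for any `1 ≤ l ≤ √k` and `δ = α k^{-4l}`: whp every
set `Z` of at most `δn` variables satisfies `X_Z ≤ √δ · n`, where `X_Z` is the number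
of clauses with exactly `l` positive literals containing a variable of `Z`. -/
theorem statement5 :
    ∃ α : ℝ, 0 < α ∧ ∀ k : ℕ, 3 ≤ k → ∀ mf : ℕ → ℕ,
      (∀ n : ℕ, 0 < n → (mf n : ℝ) / n ≤ 2 ^ k * Real.log k / k) →
      ∀ l : ℕ, 1 ≤ l → (l : ℝ) ≤ Real.sqrt k →
      Tendsto (fun n : ℕ => Pr n (mf n) k {Φ : Formula n (mf n) k |
        ∀ Z : Finset (Fin n), (Z.card : ℝ) ≤ (α / (k : ℝ) ^ (4 * l)) * n →
          ((Finset.univ.filter (fun i : Fin (mf n) =>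
              posCount Φ i = l ∧ ∃ j, (Φ i j).1 ∈ Z)).card : ℝ)
            ≤ Real.sqrt (α / (k : ℝ) ^ (4 * l)) * n}) atTop (nhds 1) := by
  refine ⟨1 / 10000, by norm_num, fun k hk mf hmf l hl _ => ?_⟩
  have hδ : (1 / 10000 : ℝ) / (k : ℝ) ^ (4 * l) = sqrtDelta k l ^ 2 := by
    rw [sqrtDelta, mul_comm 4, pow_mul]
    field_simp
    ring
  have hq0 : 0 < sqrtDelta k l := by unfold sqrtDelta; positivity
  simp only [hδ, Real.sqrt_sq hq0.le]
  set q := sqrtDelta k l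
  have hbad : Tendsto (fun n => Pr n (mf n) k {Φ | ∃ Z : Finset (Fin n),
      (#Z : ℝ) ≤ q ^ 2 * n ∧ q * n < #{i | Φ i ∈ meetingClauses l Z}}) atTop (nhds 0) := by
    refine squeeze_zero' (Eventually.of_forall fun n => div_nonneg (by positivity) (by positivity))
      ?_ (tendsto_exp_atBot.comp (tendsto_natCast_atTop_atTop.const_mul_atTop_of_neg
        (r := -(q / 2)) (by linarith)))
    filter_upwards [eventually_gt_atTop 0] with n hn
    refine Pr_exists_small_set_many_meeting_le hk hl ?_
    rw [← div_le_iff₀ (by positivity)]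
    exact hmf n hn
  have hgood := (tendsto_const_nhds (x := (1 : ℝ))).sub hbad
  rw [sub_zero] at hgood
  refine hgood.congr' ?_
  filter_upwards [eventually_gt_atTop 0] with n hn
  have : Nonempty (Formula n (mf n) k) := ⟨fun _ _ => (⟨0, hn⟩, true)⟩
  rw [Pr_eq_one_sub_Pr_compl, sub_sub_cancel]
  congr 1
  ext Φ
  simp only [Set.mem_compl_iff, Set.mem_ofPred_eq, not_exists, not_and, not_lt, meetingClauses,
    posCount, mem_filter, mem_univ, true_and]
  congr!

end RandomKSAT
end

section
/- For t ≥ 0 let E_t[Φ] be the set of all pairs (i,j) ∈ [m]×[k] such that π_t(i,j)[Φ] ∈ {−1,1}. Then the conditional joint distribution of the variables (|Φ_{ij}|)_{(i,j)∈E_t} given F_t is uniform over (V∖Z_t)^{E_t}: for every formula Φ ∈ Ω_k(n,m) and every map f : E_t[Φ] → V∖Z_t[Φ], the conditional probability given F_t of the event {∀(i,j) ∈ E_t[Φ] : |Φ′_{ij}| = f(i,j)}, evaluated at Φ, equals |V∖Z_t[Φ]|^{−|E_t[Φ]|}. -/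
/-!
Phase 1 only ever inspects the signs of all literals, the literals it has already revealed, and
whether a variable lies in the current set `Z` (which never happens at an unrevealed position).
Hence, by induction on time, a formula `Ψ` is `≡_t`-equivalent to `Φ` exactly when it is
consistent with the state of `Φ` at time `t`: same signs, same revealed literals, and variables
outside `Z_t` at the positions of `E_t`. The class of `Φ` is therefore a product set with
`|V ∖ Z_t|` choices at each position of `E_t` and one choice elsewhere, and prescribing the
variables on `E_t` picks out exactly one of its elements.
-/

open Finset MeasureTheory Filter
open scoped ENNReal

attribute [local instance] Classical.propDecidable

namespace RandomKSAT

variable {n m k : ℕ}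

attribute [ext] P1State

-- In (PI1)–(PI4), `φ_t` is the least clause of `pending`, `z_t` sits at position
-- `selectedPos`, and the new state is `advance`.
noncomputable def pending (Φ : Formula n m k) (Z : Finset (Fin n)) : Finset (Fin m) :=
  univ.filter fun i => allNeg Φ i ∧ ∀ j, (Φ i j).1 ∉ Z

noncomputable def selectedPos (Φ : Formula n m k) (Z : Finset (Fin n)) (φt : Fin m)
    (hk : 0 < k) : Fin k :=
  let J := univ.filter fun j : Fin k => j.val + 1 < k1 k ∧ Ux Φ Z ((Φ φt j).1) = 0
  if hJ : J.Nonempty then J.min' hJ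
  else ⟨min (k1 k - 1) (k - 1), by have h1 := Nat.min_le_right (k1 k - 1) (k - 1); omega⟩

noncomputable def advance (Φ : Formula n m k) (σ : P1State n m k) (φt : Fin m) (z : Fin n) :
    P1State n m k where
  Z := insert z σ.Z
  pi i j :=
    if (i = φt ∧ j.val < k1 k) ∨ (Φ i j).1 ∈ insert z σ.Z ∨
        (i ∈ Uset Φ (insert z σ.Z) ∧ pi0 Φ i j = Sum.inl true)
    then Sum.inr (Φ i j) else σ.pi i j
  lastPhi := some φt
  lastZ := some z
  stopped := false

def P1State.halt (σ : P1State n m k) : P1State n m k :=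
  { σ with stopped := true, lastPhi := none, lastZ := none }

lemma p1step_eq (Φ : Formula n m k) (σ : P1State n m k) :
    p1step Φ σ =
      if σ.stopped then σ
      else if h : (pending Φ σ.Z).Nonempty then
        if hk : 0 < k then
          advance Φ σ ((pending Φ σ.Z).min' h)
            (Φ ((pending Φ σ.Z).min' h) (selectedPos Φ σ.Z ((pending Φ σ.Z).min' h) hk)).1
        else σ.halt
      else σ.halt := rfl

lemma selectedPos_lt (Φ : Formula n m k) (Z : Finset (Fin n)) (φt : Fin m) (hk : 0 < k) :
    (selectedPos Φ Z φt hk).val < k1 k := by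
  unfold selectedPos
  dsimp only
  split
  · next hJ =>
    have h := (mem_filter.mp (min'_mem _ hJ)).2.1
    omega
  · show min (k1 k - 1) (k - 1) < k1 k
    unfold k1
    omega

lemma p1step_eq_or_eq_advance (Φ : Formula n m k) (σ : P1State n m k) :
    ((p1step Φ σ).Z = σ.Z ∧ (p1step Φ σ).pi = σ.pi) ∨
      ∃ φt z, p1step Φ σ = advance Φ σ φt z := by
  rw [p1step_eq]
  split_ifs
  · exact Or.inl ⟨rfl, rfl⟩
  · exact Or.inr ⟨_, _, rfl⟩
  all_goals exact Or.inl ⟨rfl, rfl⟩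

lemma advance_pi_eq_inr_or (Φ : Formula n m k) (σ : P1State n m k) (φt : Fin m) (z : Fin n)
    (i : Fin m) (j : Fin k) :
    (advance Φ σ φt z).pi i j = Sum.inr (Φ i j) ∨ (advance Φ σ φt z).pi i j = σ.pi i j := by
  unfold advance
  dsimp only
  split_ifs
  exacts [Or.inl rfl, Or.inr rfl]

lemma advance_pi_eq_inr (Φ : Formula n m k) (σ : P1State n m k) (φt : Fin m) (z : Fin n)
    {i : Fin m} {j : Fin k}
    (h : (i = φt ∧ j.val < k1 k) ∨ (Φ i j).1 ∈ insert z σ.Z ∨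
      (i ∈ Uset Φ (insert z σ.Z) ∧ pi0 Φ i j = Sum.inl true)) :
    (advance Φ σ φt z).pi i j = Sum.inr (Φ i j) :=
  if_pos h

section Invariants

variable {Φ : Formula n m k} {s u : ℕ} {i : Fin m} {j : Fin k}

lemma p1_succ (Φ : Formula n m k) (s : ℕ) : p1 Φ (s + 1) = p1step Φ (p1 Φ s) := rfl

lemma p1_pi_eq_inl_or_inr (Φ : Formula n m k) (s : ℕ) (i : Fin m) (j : Fin k) :
    (p1 Φ s).pi i j = Sum.inl (Φ i j).2 ∨ (p1 Φ s).pi i j = Sum.inr (Φ i j) := by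
  induction s with
  | zero => dsimp only [p1, pi0]; split_ifs <;> simp
  | succ s ih =>
    rw [p1_succ]
    rcases p1step_eq_or_eq_advance Φ (p1 Φ s) with ⟨-, hpi⟩ | ⟨φt, z, h⟩
    · rwa [hpi]
    · rw [h]
      rcases advance_pi_eq_inr_or Φ (p1 Φ s) φt z i j with h' | h' <;> rw [h']
      exacts [Or.inr rfl, ih]

lemma p1_eq_of_pi_eq_inr {l : Lit n} (h : (p1 Φ s).pi i j = Sum.inr l) : Φ i j = l := by
  rcases p1_pi_eq_inl_or_inr Φ s i j with h' | h' <;> rw [h'] at h <;> simp_all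

lemma p1_pi_eq_inr_of_le (hsu : s ≤ u) (h : (p1 Φ s).pi i j = Sum.inr (Φ i j)) :
    (p1 Φ u).pi i j = Sum.inr (Φ i j) := by
  induction u, hsu using Nat.le_induction with
  | base => exact h
  | succ u _ ih =>
    rw [p1_succ]
    rcases p1step_eq_or_eq_advance Φ (p1 Φ u) with ⟨-, hpi⟩ | ⟨φt, z, hadv⟩
    · rwa [hpi]
    · rw [hadv]
      rcases advance_pi_eq_inr_or Φ (p1 Φ u) φt z i j with h' | h' <;> rw [h']
      exact ih

lemma p1_Z_mono (hsu : s ≤ u) : (p1 Φ s).Z ⊆ (p1 Φ u).Z := by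
  induction u, hsu using Nat.le_induction with
  | base => exact subset_rfl
  | succ u _ ih =>
    refine ih.trans ?_
    rw [p1_succ]
    rcases p1step_eq_or_eq_advance Φ (p1 Φ u) with ⟨hZ, -⟩ | ⟨φt, z, hadv⟩
    · rw [hZ]
    · rw [hadv]
      exact subset_insert _ _

lemma p1_pi_eq_inr_of_mem_Z (h : (Φ i j).1 ∈ (p1 Φ s).Z) :
    (p1 Φ s).pi i j = Sum.inr (Φ i j) := by
  induction s with
  | zero => simp [p1] at h
  | succ s ih =>
    rw [p1_succ] at h ⊢
    rcases p1step_eq_or_eq_advance Φ (p1 Φ s) with ⟨hZ, hpi⟩ | ⟨φt, z, hadv⟩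
    · rw [hZ] at h
      rw [hpi]
      exact ih h
    · rw [hadv] at h ⊢
      exact advance_pi_eq_inr Φ _ φt z (Or.inr (Or.inl h))

lemma p1_fst_not_mem_Z_of_pi_eq_inl {b : Bool} (h : (p1 Φ s).pi i j = Sum.inl b) :
    (Φ i j).1 ∉ (p1 Φ s).Z := fun hZ => by
  simp [p1_pi_eq_inr_of_mem_Z hZ] at h

lemma p1_pi_eq_inr_of_mem_Uset (hU : i ∈ Uset Φ (p1 Φ s).Z) (hpos : (Φ i j).2 = true) :
    (p1 Φ s).pi i j = Sum.inr (Φ i j) := by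
  by_cases h0 : pi0 Φ i j = Sum.inl true
  · induction s with
    | zero =>
      have h0' : i ∉ Uset Φ ∅ := by simpa [pi0, hpos] using h0
      exact absurd hU h0'
    | succ s ih =>
      rw [p1_succ] at hU ⊢
      rcases p1step_eq_or_eq_advance Φ (p1 Φ s) with ⟨hZ, hpi⟩ | ⟨φt, z, hadv⟩
      · rw [hZ] at hU
        rw [hpi]
        exact ih hU
      · rw [hadv] at hU ⊢
        exact advance_pi_eq_inr Φ _ φt z (Or.inr (Or.inr ⟨hU, h0⟩))
  · have hrev : (p1 Φ 0).pi i j = Sum.inr (Φ i j) := by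
      rcases p1_pi_eq_inl_or_inr Φ 0 i j with h | h
      · exact absurd (hpos ▸ h) h0
      · exact h
    exact p1_pi_eq_inr_of_le (Nat.zero_le s) hrev

end Invariants

section Congruence

variable {Φ Ψ : Formula n m k} {Z : Finset (Fin n)}

lemma Uset_congr (hsign : ∀ i j, (Ψ i j).2 = (Φ i j).2)
    (hZ : ∀ i j, (Ψ i j).1 ∈ Z ↔ (Φ i j).1 ∈ Z) :
    Uset Ψ Z = Uset Φ Z := by
  ext i
  simp only [Uset, mem_filter, mem_univ, true_and, hsign, hZ]

lemma Ux_congr (hsign : ∀ i j, (Ψ i j).2 = (Φ i j).2)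
    (hZ : ∀ i j, (Ψ i j).1 ∈ Z ↔ (Φ i j).1 ∈ Z)
    (hU : ∀ i ∈ Uset Φ Z, ∀ j, (Φ i j).2 = true → Ψ i j = Φ i j) (x : Fin n) :
    Ux Ψ Z x = Ux Φ Z x := by
  unfold Ux
  rw [Uset_congr hsign hZ]
  congr 1
  refine filter_congr fun i hi => exists_congr fun j => ⟨fun h => ?_, fun h => ?_⟩
  · rwa [← hU i hi j (by rw [← hsign, h])]
  · rwa [hU i hi j (by rw [h])]

lemma pending_congr (hsign : ∀ i j, (Ψ i j).2 = (Φ i j).2)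
    (hZ : ∀ i j, (Ψ i j).1 ∈ Z ↔ (Φ i j).1 ∈ Z) :
    pending Ψ Z = pending Φ Z :=
  filter_congr fun i _ => by simp only [allNeg, hsign, hZ]

lemma pi0_congr (hsign : ∀ i j, (Ψ i j).2 = (Φ i j).2)
    (hrev : ∀ i j, pi0 Φ i j = Sum.inr (Φ i j) → Ψ i j = Φ i j) :
    pi0 Ψ = pi0 Φ := by
  have hU : Uset Ψ ∅ = Uset Φ ∅ := Uset_congr hsign (by simp)
  funext i j
  have hrev' := hrev i j
  unfold pi0 at hrev' ⊢
  rw [hU, hsign]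
  split_ifs with h
  · rw [hrev' (if_pos h)]
  · rfl

lemma pi0_eq_inl_true_congr (hsign : ∀ i j, (Ψ i j).2 = (Φ i j).2) (i : Fin m) (j : Fin k) :
    pi0 Ψ i j = Sum.inl true ↔ pi0 Φ i j = Sum.inl true := by
  have hU : Uset Ψ ∅ = Uset Φ ∅ := Uset_congr hsign (by simp)
  unfold pi0
  rw [hU, hsign]
  split_ifs <;> simp

lemma selectedPos_congr {φt : Fin m} (hk : 0 < k) (hUx : ∀ x, Ux Ψ Z x = Ux Φ Z x)
    (hlit : ∀ j : Fin k, j.val < k1 k → Ψ φt j = Φ φt j) :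
    selectedPos Ψ Z φt hk = selectedPos Φ Z φt hk := by
  have hJ : (univ.filter fun j : Fin k => j.val + 1 < k1 k ∧ Ux Ψ Z ((Ψ φt j).1) = 0) =
      univ.filter fun j : Fin k => j.val + 1 < k1 k ∧ Ux Φ Z ((Φ φt j).1) = 0 := by
    ext j
    simp only [mem_filter, mem_univ, true_and, hUx]
    exact and_congr_right fun hj => by rw [hlit j (by omega)]
  unfold selectedPos
  dsimp only
  rw [hJ]

lemma advance_pi_congr {σ : P1State n m k} {φt : Fin m} {z : Fin n}
    (hsign : ∀ i j, (Ψ i j).2 = (Φ i j).2)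
    (hZ : ∀ i j, (Ψ i j).1 ∈ insert z σ.Z ↔ (Φ i j).1 ∈ insert z σ.Z)
    (hrev : ∀ i j, (advance Φ σ φt z).pi i j = Sum.inr (Φ i j) → Ψ i j = Φ i j) :
    (advance Ψ σ φt z).pi = (advance Φ σ φt z).pi := by
  funext i j
  have hcond : ((i = φt ∧ j.val < k1 k) ∨ (Ψ i j).1 ∈ insert z σ.Z ∨
        (i ∈ Uset Ψ (insert z σ.Z) ∧ pi0 Ψ i j = Sum.inl true)) ↔
      ((i = φt ∧ j.val < k1 k) ∨ (Φ i j).1 ∈ insert z σ.Z ∨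
        (i ∈ Uset Φ (insert z σ.Z) ∧ pi0 Φ i j = Sum.inl true)) := by
    rw [Uset_congr hsign hZ, hZ, pi0_eq_inl_true_congr hsign]
  by_cases hc : (i = φt ∧ j.val < k1 k) ∨ (Φ i j).1 ∈ insert z σ.Z ∨
      (i ∈ Uset Φ (insert z σ.Z) ∧ pi0 Φ i j = Sum.inl true)
  · rw [advance_pi_eq_inr Ψ σ φt z (hcond.mpr hc), advance_pi_eq_inr Φ σ φt z hc,
      hrev i j (advance_pi_eq_inr Φ σ φt z hc)]
  · exact (if_neg (mt hcond.mp hc)).trans (if_neg hc).symm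

lemma advance_eq_of_pi_eq {σ : P1State n m k} {φt : Fin m} {z : Fin n}
    (h : (advance Ψ σ φt z).pi = (advance Φ σ φt z).pi) :
    advance Ψ σ φt z = advance Φ σ φt z :=
  P1State.ext rfl h rfl rfl rfl

lemma p1step_same_move {σ : P1State n m k} (hsign : ∀ i j, (Ψ i j).2 = (Φ i j).2)
    (hZ : ∀ i j, (Ψ i j).1 ∈ σ.Z ↔ (Φ i j).1 ∈ σ.Z)
    (hU : ∀ i ∈ Uset Φ σ.Z, ∀ j, (Φ i j).2 = true → Ψ i j = Φ i j)
    (hrev : ∀ i j, (p1step Φ σ).pi i j = Sum.inr (Φ i j) → Ψ i j = Φ i j) :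
    p1step Ψ σ = p1step Φ σ ∨
      ∃ φt z, p1step Ψ σ = advance Ψ σ φt z ∧ p1step Φ σ = advance Φ σ φt z := by
  have hstep := p1step_eq Φ σ
  rw [p1step_eq Ψ, pending_congr hsign hZ]
  split_ifs at hstep ⊢ with hs hE hk
  · exact Or.inl hstep.symm
  · set φt := (pending Φ σ.Z).min' hE
    have hlit : ∀ j : Fin k, j.val < k1 k → Ψ φt j = Φ φt j := fun j hj =>
      hrev φt j (hstep ▸ advance_pi_eq_inr Φ σ φt _ (Or.inl ⟨rfl, hj⟩))
    have hsel := selectedPos_congr hk (Ux_congr hsign hZ hU) hlit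
    refine Or.inr ⟨φt, _, ?_, hstep⟩
    rw [hsel, hlit _ (selectedPos_lt Φ σ.Z φt hk)]
  all_goals exact Or.inl hstep.symm

end Congruence

def compatibleLits (Z : Finset (Fin n)) : Bool ⊕ Lit n → Finset (Lit n)
  | .inl b => Zᶜ ×ˢ {b}
  | .inr l => {l}

@[simp]
lemma mem_compatibleLits_inl {Z : Finset (Fin n)} {b : Bool} {l : Lit n} :
    l ∈ compatibleLits Z (.inl b) ↔ l.1 ∉ Z ∧ l.2 = b := by
  simp only [compatibleLits, mem_product, mem_compl, mem_singleton]

@[simp]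
lemma mem_compatibleLits_inr {Z : Finset (Fin n)} {l l' : Lit n} :
    l ∈ compatibleLits Z (.inr l') ↔ l = l' := by
  simp [compatibleLits]

lemma card_compatibleLits (Z : Finset (Fin n)) (v : Bool ⊕ Lit n) :
    (compatibleLits Z v).card = if v.isLeft then n - Z.card else 1 := by
  cases v <;> simp [compatibleLits, card_compl]

def Consistent (σ : P1State n m k) (Ψ : Formula n m k) : Prop :=
  ∀ i j, Ψ i j ∈ compatibleLits σ.Z (σ.pi i j)

section Consistent

variable {σ : P1State n m k} {Φ Ψ : Formula n m k}

lemma Consistent.eq_of_pi_eq_inr (h : Consistent σ Ψ) {i : Fin m} {j : Fin k} {l : Lit n}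
    (hl : σ.pi i j = Sum.inr l) : Ψ i j = l := by
  simpa [hl] using h i j

lemma Consistent.snd_eq (hΨ : Consistent σ Ψ) (hΦ : Consistent σ Φ) (i : Fin m) (j : Fin k) :
    (Ψ i j).2 = (Φ i j).2 := by
  have hΨ := hΨ i j
  have hΦ := hΦ i j
  generalize σ.pi i j = v at hΨ hΦ
  cases v <;> simp_all

lemma Consistent.fst_mem_iff (hΨ : Consistent σ Ψ) (hΦ : Consistent σ Φ) (i : Fin m)
    (j : Fin k) : (Ψ i j).1 ∈ σ.Z ↔ (Φ i j).1 ∈ σ.Z := by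
  have hΨ := hΨ i j
  have hΦ := hΦ i j
  generalize σ.pi i j = v at hΨ hΦ
  cases v <;> simp_all

lemma consistent_p1_self (Φ : Formula n m k) (s : ℕ) : Consistent (p1 Φ s) Φ := fun i j => by
  rcases p1_pi_eq_inl_or_inr Φ s i j with h | h <;> rw [h]
  · exact mem_compatibleLits_inl.mpr ⟨p1_fst_not_mem_Z_of_pi_eq_inl h, rfl⟩
  · exact mem_compatibleLits_inr.mpr rfl

lemma consistent_p1_mono {s t : ℕ} (hst : s ≤ t) (h : Consistent (p1 Φ t) Ψ) :
    Consistent (p1 Φ s) Ψ := fun i j => by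
  rcases p1_pi_eq_inl_or_inr Φ t i j with ht | ht
  · rcases p1_pi_eq_inl_or_inr Φ s i j with hs | hs
    · have hΨ := h i j
      rw [ht, mem_compatibleLits_inl] at hΨ
      rw [hs, mem_compatibleLits_inl]
      exact ⟨fun hZ => hΨ.1 (p1_Z_mono hst hZ), hΨ.2⟩
    · simp [p1_pi_eq_inr_of_le hst hs] at ht
  · rw [h.eq_of_pi_eq_inr ht]
    exact consistent_p1_self Φ s i j

end Consistent

section Class

variable {Φ Ψ : Formula n m k} {s t : ℕ}

lemma p1_succ_same_move (hs : p1 Ψ s = p1 Φ s) (hc : Consistent (p1 Φ s) Ψ)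
    (hrev : ∀ i j, (p1 Φ (s + 1)).pi i j = Sum.inr (Φ i j) → Ψ i j = Φ i j) :
    p1 Ψ (s + 1) = p1 Φ (s + 1) ∨ ∃ φt z,
      p1 Ψ (s + 1) = advance Ψ (p1 Φ s) φt z ∧ p1 Φ (s + 1) = advance Φ (p1 Φ s) φt z := by
  rw [p1_succ, p1_succ, hs]
  have hΦ := consistent_p1_self Φ s
  exact p1step_same_move (hc.snd_eq hΦ) (hc.fst_mem_iff hΦ)
    (fun i hi j hj => hc.eq_of_pi_eq_inr (p1_pi_eq_inr_of_mem_Uset hi hj)) hrev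

lemma p1_succ_eq_of_pi_eq (hs : p1 Ψ s = p1 Φ s) (hc : Consistent (p1 Φ s) Ψ)
    (hpi : (p1 Ψ (s + 1)).pi = (p1 Φ (s + 1)).pi) : p1 Ψ (s + 1) = p1 Φ (s + 1) := by
  have hrev : ∀ i j, (p1 Φ (s + 1)).pi i j = Sum.inr (Φ i j) → Ψ i j = Φ i j :=
    fun i j h => p1_eq_of_pi_eq_inr (hpi ▸ h)
  rcases p1_succ_same_move hs hc hrev with h | ⟨φt, z, hΨ, hΦ⟩
  · exact h
  · rw [hΨ, hΦ] at hpi ⊢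
    exact advance_eq_of_pi_eq hpi

lemma p1_succ_eq_of_consistent (hs : p1 Ψ s = p1 Φ s) (hc : Consistent (p1 Φ (s + 1)) Ψ) :
    p1 Ψ (s + 1) = p1 Φ (s + 1) := by
  have hc' := consistent_p1_mono (Nat.le_succ s) hc
  refine p1_succ_eq_of_pi_eq hs hc' ?_
  have hΦ := consistent_p1_self Φ (s + 1)
  rcases p1_succ_same_move hs hc' fun i j => hc.eq_of_pi_eq_inr with h | ⟨φt, z, hΨ, hΦeq⟩
  · rw [h]
  · rw [hΦeq] at hc hΦ
    rw [hΨ, hΦeq]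
    exact advance_pi_congr (hc'.snd_eq (consistent_p1_self Φ s)) (hc.fst_mem_iff hΦ)
      fun i j => hc.eq_of_pi_eq_inr

lemma p1_zero_eq_of_pi0_eq (h : pi0 Ψ = pi0 Φ) : p1 Ψ 0 = p1 Φ 0 :=
  P1State.ext rfl h rfl rfl rfl

lemma p1_eq_of_consistent (h : Consistent (p1 Φ t) Ψ) : ∀ s ≤ t, p1 Ψ s = p1 Φ s := by
  intro s hst
  induction s with
  | zero =>
    have h0 := consistent_p1_mono (Nat.zero_le t) h
    exact p1_zero_eq_of_pi0_eq <|
      pi0_congr (h0.snd_eq (consistent_p1_self Φ 0)) fun i j => h0.eq_of_pi_eq_inr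
  | succ s ih => exact p1_succ_eq_of_consistent (ih (by omega)) (consistent_p1_mono hst h)

lemma p1_eq_of_pi_eq (h : ∀ s ≤ t, (p1 Ψ s).pi = (p1 Φ s).pi) : ∀ s ≤ t, p1 Ψ s = p1 Φ s := by
  intro s hst
  induction s with
  | zero => exact p1_zero_eq_of_pi0_eq (h 0 hst)
  | succ s ih =>
    have hs := ih (by omega)
    exact p1_succ_eq_of_pi_eq hs (hs ▸ consistent_p1_self Ψ s) (h _ hst)

lemma mem_cls_iff : Ψ ∈ cls t Φ ↔ Consistent (p1 Φ t) Ψ := by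
  simp only [cls, mem_filter, mem_univ, true_and]
  refine ⟨fun h => ?_, fun h s hs => by rw [p1_eq_of_consistent h s hs]⟩
  rw [← p1_eq_of_pi_eq h t le_rfl]
  exact consistent_p1_self Ψ t

lemma cls_eq_piFinset (Φ : Formula n m k) (t : ℕ) :
    cls t Φ = Fintype.piFinset fun i =>
      Fintype.piFinset fun j => compatibleLits (p1 Φ t).Z ((p1 Φ t).pi i j) := by
  ext Ψ
  simp only [mem_cls_iff, Fintype.mem_piFinset]
  rfl

lemma card_cls (Φ : Formula n m k) (t : ℕ) :
    (cls t Φ).card = (n - (p1 Φ t).Z.card) ^ (Et Φ t).card := by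
  have hE : ∀ p : Fin m × Fin k, ((p1 Φ t).pi p.1 p.2).isLeft ↔ p ∈ Et Φ t := fun p => by
    simp [Et, Sum.isLeft_iff]
  simp only [cls_eq_piFinset, Fintype.card_piFinset, card_compatibleLits]
  rw [← Fintype.prod_prod_type (fun p => if ((p1 Φ t).pi p.1 p.2).isLeft then _ else 1)]
  simp only [hE, Fintype.prod_ite_mem, prod_const]

noncomputable def fillUnrevealed (Φ : Formula n m k) (t : ℕ) (f : Fin m × Fin k → Fin n) :
    Formula n m k :=
  fun i j => if (i, j) ∈ Et Φ t then (f (i, j), (Φ i j).2) else Φ i j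

lemma filter_cls_eq_singleton {f : Fin m × Fin k → Fin n}
    (hf : ∀ p ∈ Et Φ t, f p ∉ (p1 Φ t).Z) :
    (cls t Φ).filter (fun Ψ => ∀ p ∈ Et Φ t, (Ψ p.1 p.2).1 = f p) =
      {fillUnrevealed Φ t f} := by
  ext Ψ
  simp only [mem_filter, mem_singleton, mem_cls_iff, Consistent, Prod.forall, funext_iff,
    ← forall_and]
  refine forall_congr' fun i => forall_congr' fun j => ?_
  have hE : (i, j) ∈ Et Φ t ↔ ((p1 Φ t).pi i j).isLeft := by simp [Et, Sum.isLeft_iff]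
  rcases p1_pi_eq_inl_or_inr Φ t i j with h | h
  · have hfZ : f (i, j) ∉ (p1 Φ t).Z := hf _ (hE.mpr (by simp [h]))
    simp only [h, hE, fillUnrevealed, mem_compatibleLits_inl, Sum.isLeft_inl, if_true,
      Prod.ext_iff, forall_const]
    exact ⟨fun ⟨⟨_, hb⟩, hv⟩ => ⟨hv, hb⟩, fun ⟨hv, hb⟩ => ⟨⟨hv ▸ hfZ, hb⟩, hv⟩⟩
  · simp [h, hE, fillUnrevealed]

end Class

theorem statement9_general (ε : ℝ) :
    ∃ k₀ : ℕ, ∀ k : ℕ, k₀ ≤ k → ∃ n₀ : ℕ, ∀ n : ℕ, n₀ ≤ n →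
    ∀ t : ℕ, ∀ Φ : Formula n (mOf ε k n) k,
    ∀ f : Fin (mOf ε k n) × Fin k → Fin n,
      (∀ p ∈ Et Φ t, f p ∉ (p1 Φ t).Z) →
      (((cls t Φ).filter
          (fun Ψ => ∀ p ∈ Et Φ t, (Ψ p.1 p.2).1 = f p)).card : ℝ) /
        ((cls t Φ).card : ℝ)
      = (((n - (p1 Φ t).Z.card : ℕ) : ℝ) ^ (Et Φ t).card)⁻¹ := by
  refine ⟨0, fun k _ => ⟨0, fun n _ t Φ f hf => ?_⟩⟩
  rw [filter_cls_eq_singleton hf, card_singleton, card_cls]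
  push_cast
  exact one_div _

/-- Proposition 4.  Given `F_t`, the unrevealed variables are
independent and uniform on `V∖Z_t`: for every `Φ` and every map `f : E_t[Φ] → V∖Z_t[Φ]`,
the conditional probability (i.e. the fraction of formulas `Ψ` in the `≡_t`-class of
`Φ`) of the event `∀ (i,j) ∈ E_t[Φ], |Ψ_{ij}| = f(i,j)` equals
`|V∖Z_t[Φ]|^{-|E_t[Φ]|}`. -/
theorem statement9 (ε : ℝ) (hε0 : 0 < ε) (hε1 : ε < 0.1) :
    ∃ k₀ : ℕ, ∀ k : ℕ, k₀ ≤ k → ∃ n₀ : ℕ, ∀ n : ℕ, n₀ ≤ n →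
    ∀ t : ℕ, ∀ Φ : Formula n (mOf ε k n) k,
    ∀ f : Fin (mOf ε k n) × Fin k → Fin n,
      (∀ p ∈ Et Φ t, f p ∉ (p1 Φ t).Z) →
      (((cls t Φ).filter
          (fun Ψ => ∀ p ∈ Et Φ t, (Ψ p.1 p.2).1 = f p)).card : ℝ) /
        ((cls t Φ).card : ℝ)
      = (((n - (p1 Φ t).Z.card : ℕ) : ℝ) ^ (Et Φ t).card)⁻¹ :=
  statement9_general ε

end RandomKSAT
end

section
/- Whp the stopping time T of the Phase-1 process applied to the random formula Φ satisfies T < 4n k^{−1} ln ω. -/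
/-!
If Phase 1 runs for `θ` steps, the clauses `φ_1 < ⋯ < φ_θ` it picks in (PI1) are all-negative and
`φ_t` avoids the `t - 1` variables of `Z_{t-1}`. All-negative clauses are never `Z`-unique, so
`Z_{t-1}` is determined by `φ_1, …, φ_{t-1}` together with the clauses outside `{φ_1, …, φ_θ}`.
Fixing the positions of the `φ_t` and the other clauses, `φ_t` therefore has at most `(n - t + 1)^k`
of the `(2n)^k` possible values, and
`P(T ≥ θ) ≤ C(m, θ) ∏_{t < θ} ((n - t) / 2n)^k ≤ (e m / θ 2^k)^θ exp(-k θ (θ - 1) / 2n)`.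
For `θ = ⌈4 n ln ω / k⌉` and `m ≤ ω 2^k n / k` this is at most `ω² 2^{-θ} → 0`.
-/

open Finset MeasureTheory Filter
open scoped ENNReal

attribute [local instance] Classical.propDecidable

lemma Fin.strictMono_snoc {α : Type*} [Preorder α] {t : ℕ} {c : Fin t → α} {a : α}
    (hc : StrictMono c) (ha : ∀ s, c s < a) : StrictMono (Fin.snoc c a : Fin (t + 1) → α) := by
  intro x y hxy
  induction y using Fin.lastCases with
  | last =>
    induction x using Fin.lastCases with
    | last => exact absurd hxy (lt_irrefl _)
    | cast x => simpa using ha x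
  | cast y =>
    induction x using Fin.lastCases with
    | last => exact absurd hxy (not_lt.2 (Fin.le_last _))
    | cast x => simpa using hc (Fin.castSucc_lt_castSucc_iff.1 hxy)

lemma Finset.card_filter_strictMono_le (θ m : ℕ) :
    #{c : Fin θ → Fin m | StrictMono c} ≤ m.choose θ := by
  calc #{c : Fin θ → Fin m | StrictMono c}
      ≤ #(powersetCard θ (univ : Finset (Fin m))) := by
        refine card_le_card_of_injOn (fun c => univ.image c) (fun c hc => ?_)
          (fun c₁ hc₁ c₂ hc₂ h => ?_)
        · rw [mem_coe, mem_powersetCard, card_image_of_injective _ (mem_filter.1 hc).2.injective]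
          exact ⟨subset_univ _, by simp⟩
        · rw [← (mem_filter.1 hc₁).2.range_inj (mem_filter.1 hc₂).2, ← Set.image_univ,
            ← Set.image_univ, ← coe_univ, ← coe_image, ← coe_image]
          exact congrArg _ h
    _ = m.choose θ := by simp

lemma Finset.card_filter_comp_le {α C : Type*} [Fintype α] [Fintype C] {θ : ℕ}
    {e : Fin θ → α} (he : Function.Injective e)
    (P : ({i // i ∉ univ.image e} → C) → (Fin θ → C) → Prop) {N : ℕ}
    (hP : ∀ g, #{c | P g c} ≤ N) :
    #{f : α → C | P (fun i => f i) (f ∘ e)} ≤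
      Fintype.card C ^ (Fintype.card α - θ) * N := by
  calc #{f : α → C | P (fun i => f i) (f ∘ e)}
      ≤ #((univ : Finset ({i // i ∉ univ.image e} → C)).sigma fun g =>
          ({c | P g c} : Finset _)) := by
        refine card_le_card_of_injOn (fun f => ⟨fun i => f i, f ∘ e⟩) (fun f hf => ?_) ?_
        · exact mem_sigma.2 ⟨mem_univ _, mem_filter.2 ⟨mem_univ _, (mem_filter.1 hf).2⟩⟩
        · intro f₁ _ f₂ _ h
          simp only [Sigma.mk.injEq] at h
          funext i
          by_cases hi : i ∈ univ.image e
          · obtain ⟨s, -, rfl⟩ := mem_image.1 hi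
            exact congrFun (eq_of_heq h.2) s
          · exact congrFun h.1 ⟨i, hi⟩
    _ ≤ ∑ _g : {i // i ∉ univ.image e} → C, N := by
        rw [card_sigma]
        exact sum_le_sum fun g _ => hP g
    _ = _ := by
        rw [sum_const, card_univ, Fintype.card_fun, Fintype.card_subtype_compl, Fintype.card_coe,
          card_image_of_injective _ he, card_univ, Fintype.card_fin, smul_eq_mul]

lemma Nat.choose_le_exp_one_mul_div_pow (m θ : ℕ) :
    (m.choose θ : ℝ) ≤ (Real.exp 1 * m / θ) ^ θ := by
  rcases Nat.eq_zero_or_pos θ with rfl | hθ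
  · simp
  have hfac : (θ : ℝ) ^ θ / θ.factorial ≤ Real.exp θ :=
    Real.pow_div_factorial_le_exp (θ : ℝ) (Nat.cast_nonneg θ) θ
  calc (m.choose θ : ℝ) ≤ (m : ℝ) ^ θ / θ.factorial := Nat.choose_le_pow_div θ m
    _ ≤ (m : ℝ) ^ θ * (Real.exp θ / (θ : ℝ) ^ θ) := by
        rw [div_eq_mul_inv]
        gcongr
        rw [le_div_iff₀ (by positivity), ← div_eq_inv_mul]
        exact hfac
    _ = (Real.exp 1 * m / θ) ^ θ := by
        rw [div_pow, mul_pow, Real.exp_one_pow]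
        ring

lemma Finset.sum_range_natCast_id (θ : ℕ) :
    ∑ t ∈ range θ, (t : ℝ) = θ * (θ - 1) / 2 := by
  induction θ with
  | zero => simp
  | succ θ ih =>
    rw [sum_range_succ, ih]
    push_cast
    ring

lemma prod_range_sub_div_pow_le (n k θ : ℕ) (hn : 0 < n) :
    ∏ t ∈ range θ, (((n - t : ℕ) : ℝ) / (2 * n)) ^ k ≤
      ((2 : ℝ) ^ k)⁻¹ ^ θ * Real.exp (-(k * (θ * (θ - 1) / 2) / n)) := by
  have hnR : (0 : ℝ) < n := by exact_mod_cast hn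
  have hfactor : ∀ t : ℕ, (((n - t : ℕ) : ℝ) / (2 * n)) ^ k ≤
      ((2 : ℝ) ^ k)⁻¹ * Real.exp (-(k * t / n)) := by
    intro t
    have h : ((n - t : ℕ) : ℝ) / n ≤ Real.exp (-(t / n)) := by
      rcases le_or_gt t n with htn | htn
      · rw [Nat.cast_sub htn, sub_div, div_self hnR.ne']
        exact Real.one_sub_le_exp_neg _
      · rw [Nat.sub_eq_zero_of_le htn.le, Nat.cast_zero, zero_div]
        positivity
    calc (((n - t : ℕ) : ℝ) / (2 * n)) ^ k
        = ((2 : ℝ) ^ k)⁻¹ * (((n - t : ℕ) : ℝ) / n) ^ k := by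
          rw [mul_comm (2 : ℝ), ← div_div, div_pow, div_eq_inv_mul]
      _ ≤ ((2 : ℝ) ^ k)⁻¹ * Real.exp (-(t / n)) ^ k := by gcongr
      _ = ((2 : ℝ) ^ k)⁻¹ * Real.exp (-(k * t / n)) := by
          rw [← Real.exp_nat_mul]
          ring_nf
  calc ∏ t ∈ range θ, (((n - t : ℕ) : ℝ) / (2 * n)) ^ k
      ≤ ∏ t ∈ range θ, ((2 : ℝ) ^ k)⁻¹ * Real.exp (-(k * t / n)) :=
        prod_le_prod (fun _ _ => by positivity) fun t _ => hfactor t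
    _ = ((2 : ℝ) ^ k)⁻¹ ^ θ * Real.exp (-(k * (θ * (θ - 1) / 2) / n)) := by
        rw [prod_mul_distrib, prod_const, card_range, ← Real.exp_sum, ← sum_range_natCast_id]
        congr 2
        rw [sum_neg_distrib, mul_sum, sum_div]

lemma choose_mul_prod_range_sub_div_pow_le {n m k θ : ℕ} (hn : 0 < n) (hθ : 0 < θ) {ω : ℝ}
    (hω : Real.exp 1 ≤ ω) (hm : (m : ℝ) ≤ ω * 2 ^ k * n / k)
    (hθω : 4 * n * Real.log ω ≤ k * θ) :
    (m.choose θ : ℝ) * ∏ t ∈ range θ, (((n - t : ℕ) : ℝ) / (2 * n)) ^ k ≤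
      ω ^ 2 * (1 / 2) ^ θ := by
  set L := Real.log ω
  have hωpos : 0 < ω := (Real.exp_pos 1).trans_le hω
  have hL : 1 ≤ L := by
    rw [← Real.log_exp 1]
    exact Real.log_le_log (Real.exp_pos 1) hω
  have hnR : (0 : ℝ) < n := by exact_mod_cast hn
  have hθR : (1 : ℝ) ≤ θ := by exact_mod_cast hθ
  have hkθ : (0 : ℝ) < k * θ := by nlinarith
  have hkR : (0 : ℝ) < k := pos_of_mul_pos_left hkθ (by linarith)
  have hbase : Real.exp 1 * m / θ * ((2 : ℝ) ^ k)⁻¹ ≤ Real.exp 1 * ω / (4 * L) := by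
    have hm' : (m : ℝ) / 2 ^ k ≤ ω * n / k := by
      rw [div_le_iff₀ (by positivity)]
      calc (m : ℝ) ≤ ω * 2 ^ k * n / k := hm
        _ = ω * n / k * 2 ^ k := by ring
    calc Real.exp 1 * m / θ * ((2 : ℝ) ^ k)⁻¹ = Real.exp 1 * (m / 2 ^ k) / θ := by ring
      _ ≤ Real.exp 1 * (ω * n / k) / θ := by gcongr
      _ = Real.exp 1 * ω * (n / (k * θ)) := by field_simp
      _ ≤ Real.exp 1 * ω * (1 / (4 * L)) := by
          refine mul_le_mul_of_nonneg_left ?_ (by positivity)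
          rw [div_le_div_iff₀ hkθ (by positivity)]
          linarith
      _ = Real.exp 1 * ω / (4 * L) := by ring
  -- `exp (2 L) = ω²`, and `k θ ≥ 4 n L` makes the exponent at least `2 L (θ - 1)`
  have hexp : Real.exp (-(k * (θ * (θ - 1) / 2) / n)) ≤ ω ^ 2 * ((ω ^ 2)⁻¹) ^ θ := by
    have hω2 : Real.exp (2 * L) = ω ^ 2 := by
      rw [show (2 : ℝ) * L = (2 : ℕ) * L by norm_num, Real.exp_nat_mul, Real.exp_log hωpos]
    have h : ω ^ 2 * ((ω ^ 2)⁻¹) ^ θ = Real.exp (-(2 * L * (θ - 1))) := by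
      rw [show -(2 * L * (θ - 1)) = 2 * L + θ * (-(2 * L)) by ring, Real.exp_add,
        Real.exp_nat_mul, Real.exp_neg, hω2]
    rw [h, Real.exp_le_exp, neg_le_neg_iff, le_div_iff₀ hnR]
    nlinarith [mul_le_mul_of_nonneg_right hθω (sub_nonneg.2 hθR)]
  calc (m.choose θ : ℝ) * ∏ t ∈ range θ, (((n - t : ℕ) : ℝ) / (2 * n)) ^ k
      ≤ (Real.exp 1 * m / θ) ^ θ *
          (((2 : ℝ) ^ k)⁻¹ ^ θ * Real.exp (-(k * (θ * (θ - 1) / 2) / n))) :=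
        mul_le_mul (Nat.choose_le_exp_one_mul_div_pow m θ) (prod_range_sub_div_pow_le n k θ hn)
          (by positivity) (by positivity)
    _ = (Real.exp 1 * m / θ * ((2 : ℝ) ^ k)⁻¹) ^ θ *
          Real.exp (-(k * (θ * (θ - 1) / 2) / n)) := by
        rw [mul_pow]
        ring
    _ ≤ (Real.exp 1 * ω / (4 * L)) ^ θ * (ω ^ 2 * ((ω ^ 2)⁻¹) ^ θ) := by gcongr
    _ = ω ^ 2 * (Real.exp 1 / (4 * L * ω)) ^ θ := by
        rw [mul_left_comm, ← mul_pow]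
        congr 2
        field_simp
    _ ≤ ω ^ 2 * (1 / 2) ^ θ := by
        refine mul_le_mul_of_nonneg_left (pow_le_pow_left₀ (by positivity) ?_ θ) (by positivity)
        rw [div_le_div_iff₀ (by positivity) two_pos]
        nlinarith

namespace RandomKSAT

section Runs

variable {n k : ℕ}

def NegAvoids (c : Fin k → Lit n) (Z : Finset (Fin n)) : Prop :=
  (∀ j, (c j).2 = false) ∧ ∀ j, (c j).1 ∉ Z

lemma card_filter_negAvoids (Z : Finset (Fin n)) :
    #{c : Fin k → Lit n | NegAvoids c Z} = (n - #Z) ^ k := by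
  have hlit : #{l : Lit n | l.2 = false ∧ l.1 ∉ Z} = n - #Z := by
    rw [show n - #Z = #Zᶜ by rw [card_compl, Fintype.card_fin]]
    refine card_nbij' Prod.fst (fun x => (x, false)) ?_ ?_ ?_ ?_ <;> intro l hl
    all_goals simp_all [Prod.ext_iff]
  have hpi : ({c : Fin k → Lit n | NegAvoids c Z} : Finset _) =
      Fintype.piFinset fun _ => {l : Lit n | l.2 = false ∧ l.1 ∉ Z} := by
    ext c
    simp only [Fintype.mem_piFinset, mem_filter, mem_univ, true_and]
    simp only [NegAvoids, forall_and]
  rw [hpi, Fintype.card_piFinset, prod_const, card_univ, Fintype.card_fin, hlit]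

variable (sel : Finset (Fin n) → (Fin k → Lit n) → Fin k)

/-- `runZ sel c` is the set `Z_t` after (PI1) has chosen the clauses `c 0, …, c (t - 1)` and (PI2)
has picked position `sel Z_s (c s)` of each; `IsRun sel c` says that every chosen clause was
all-negative and avoided the current `Z`. -/
def runZ : {t : ℕ} → (Fin t → Fin k → Lit n) → Finset (Fin n)
  | 0, _ => ∅
  | t + 1, c =>
    insert (c (Fin.last t) (sel (runZ (Fin.init c)) (c (Fin.last t)))).1 (runZ (Fin.init c))

def IsRun : {t : ℕ} → (Fin t → Fin k → Lit n) → Prop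
  | 0, _ => True
  | t + 1, c => IsRun (Fin.init c) ∧ NegAvoids (c (Fin.last t)) (runZ sel (Fin.init c))

lemma card_runZ : ∀ {t : ℕ} {c : Fin t → Fin k → Lit n}, IsRun sel c → #(runZ sel c) = t
  | 0, _, _ => rfl
  | _ + 1, _, ⟨hrun, hneg⟩ => by
    rw [runZ, card_insert_of_notMem (hneg.2 _), card_runZ hrun]

lemma card_filter_isRun_le :
    ∀ t : ℕ, #{c : Fin t → Fin k → Lit n | IsRun sel c} ≤ ∏ s ∈ range t, (n - s) ^ k
  | 0 => (card_filter_le _ _).trans (by simp)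
  | t + 1 => by
    calc #{c : Fin (t + 1) → Fin k → Lit n | IsRun sel c}
        ≤ #(({c | IsRun sel c} : Finset (Fin t → Fin k → Lit n)).sigma fun c =>
            ({x | NegAvoids x (runZ sel c)} : Finset (Fin k → Lit n))) := by
          refine card_le_card_of_injOn (fun c => ⟨Fin.init c, c (Fin.last t)⟩) ?_ ?_
          · intro c hc
            obtain ⟨hrun, hneg⟩ := (mem_filter.1 hc).2
            exact mem_sigma.2
              ⟨mem_filter.2 ⟨mem_univ _, hrun⟩, mem_filter.2 ⟨mem_univ _, hneg⟩⟩
          · intro c₁ _ c₂ _ h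
            simp only [Sigma.mk.injEq, heq_eq_eq] at h
            rw [← Fin.snoc_init_self c₁, ← Fin.snoc_init_self c₂, h.1, h.2]
      _ = ∑ c ∈ {c : Fin t → Fin k → Lit n | IsRun sel c}, (n - t) ^ k := by
          rw [card_sigma]
          refine sum_congr rfl fun c hc => ?_
          rw [card_filter_negAvoids, card_runZ sel (mem_filter.1 hc).2]
      _ ≤ ∏ s ∈ range (t + 1), (n - s) ^ k := by
          rw [sum_const, smul_eq_mul, prod_range_succ]
          exact Nat.mul_le_mul_right _ (card_filter_isRun_le t)

end Runs

section UniqueCount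

variable {n m k : ℕ}

def IsUnique (c : Fin k → Lit n) (Z : Finset (Fin n)) : Prop :=
  #{j | (c j).2 = true ∧ (c j).1 ∉ Z} = 1 ∧ ∀ j, (c j).2 = false → (c j).1 ∉ Z

noncomputable def uniqueCount {ι : Type*} [Fintype ι] (F : ι → Fin k → Lit n)
    (Z : Finset (Fin n)) (x : Fin n) : ℕ :=
  #{i | IsUnique (F i) Z ∧ ∃ j, F i j = (x, true)}

lemma Ux_eq_uniqueCount (Φ : Formula n m k) : Ux Φ = uniqueCount Φ := by
  funext Z x
  rw [Ux, Uset, filter_filter, uniqueCount]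
  congr 1
  ext i
  rw [mem_filter, mem_filter]
  rfl

lemma not_isUnique_of_allNeg {c : Fin k → Lit n} {Z : Finset (Fin n)}
    (h : ∀ j, (c j).2 = false) : ¬ IsUnique c Z := by
  intro hc
  simpa [h] using hc.1

lemma uniqueCount_subtype_of_allNeg {ι : Type*} [Fintype ι] {F : ι → Fin k → Lit n}
    {p : ι → Prop} [Fintype {i // p i}] (hp : ∀ i, ¬ p i → ∀ j, (F i j).2 = false) :
    uniqueCount (fun i : {i // p i} => F i) = uniqueCount F := by
  funext Z x
  refine card_nbij (fun i => i.val) ?_ ?_ ?_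
  · intro i hi
    simpa using hi
  · intro i _ j _ h
    exact Subtype.ext h
  · intro i hi
    have hi' := (mem_filter.1 hi).2
    exact ⟨⟨i, not_not.1 fun hpi => not_isUnique_of_allNeg (hp i hpi) hi'.1⟩,
      mem_filter.2 ⟨mem_univ _, hi'⟩, rfl⟩

end UniqueCount

section PhaseOne

variable {n m k : ℕ} {Φ : Formula n m k}

noncomputable def freshNeg (Φ : Formula n m k) (Z : Finset (Fin n)) : Finset (Fin m) :=
  univ.filter fun i => allNeg Φ i ∧ ∀ j, (Φ i j).1 ∉ Z

lemma mem_freshNeg {Z : Finset (Fin n)} {i : Fin m} :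
    i ∈ freshNeg Φ Z ↔ NegAvoids (Φ i) Z := by
  rw [freshNeg, mem_filter]
  exact ⟨And.right, fun h => ⟨mem_univ _, h⟩⟩

lemma freshNeg_anti {Z Z' : Finset (Fin n)} (h : Z ⊆ Z') : freshNeg Φ Z' ⊆ freshNeg Φ Z :=
  fun _ hi => mem_freshNeg.2 ⟨(mem_freshNeg.1 hi).1, fun j hj => (mem_freshNeg.1 hi).2 j (h hj)⟩

/-- The rule (PI2), with `u Z x` in place of `U_{t-1}(x)` for `Z = Z_{t-1}`. -/
noncomputable def pickPos (hk : 0 < k) (u : Finset (Fin n) → Fin n → ℕ) (Z : Finset (Fin n))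
    (c : Fin k → Lit n) : Fin k :=
  if hJ : (univ.filter fun j : Fin k => j.val + 1 < k1 k ∧ u Z (c j).1 = 0).Nonempty then
    (univ.filter fun j : Fin k => j.val + 1 < k1 k ∧ u Z (c j).1 = 0).min' hJ
  else ⟨min (k1 k - 1) (k - 1), by omega⟩

lemma p1_stopped_eq_false {t : ℕ} (h : t ≤ TT Φ) : (p1 Φ t).stopped = false := by
  cases t with
  | zero => rfl
  | succ u =>
    by_contra hs
    have : TT Φ ≤ u := Nat.sInf_le (show (p1 Φ (u + 1)).stopped = true by simpa using hs)
    omega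

lemma p1_succ_Z_eq_insert (hk : 0 < k) {t : ℕ} (h : (p1 Φ (t + 1)).stopped = false) :
    ∃ hE : (freshNeg Φ (p1 Φ t).Z).Nonempty, (p1 Φ (t + 1)).Z =
      insert (Φ ((freshNeg Φ (p1 Φ t).Z).min' hE)
        (pickPos hk (Ux Φ) (p1 Φ t).Z (Φ ((freshNeg Φ (p1 Φ t).Z).min' hE)))).1
        (p1 Φ t).Z := by
  have hs : (p1 Φ t).stopped = false := by
    by_contra hs
    simp [p1, p1step, Bool.not_eq_false _ ▸ hs] at h
  by_cases hE : (freshNeg Φ (p1 Φ t).Z).Nonempty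
  · refine ⟨hE, ?_⟩
    simp only [p1, p1step, hs, Bool.false_eq_true, if_false]
    rw [dif_pos (show (univ.filter fun i : Fin m =>
      allNeg Φ i ∧ ∀ j, (Φ i j).1 ∉ (p1 Φ t).Z).Nonempty from hE), dif_pos hk]
    rfl
  · simp only [p1, p1step, hs, Bool.false_eq_true, if_false] at h
    rw [dif_neg (show ¬ (univ.filter fun i : Fin m =>
      allNeg Φ i ∧ ∀ j, (Φ i j).1 ∉ (p1 Φ t).Z).Nonempty from hE)] at h
    cases h

lemma exists_run_of_le_TT (hk : 0 < k) {θ : ℕ} (hθ : θ ≤ TT Φ) :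
    ∃ c : Fin θ → Fin m, StrictMono c ∧ (∀ s, allNeg Φ (c s)) ∧
      IsRun (pickPos hk (Ux Φ)) (Φ ∘ c) := by
  suffices h : ∀ t ≤ θ, ∃ c : Fin t → Fin m, StrictMono c ∧ (∀ s, allNeg Φ (c s)) ∧
      (∀ s, ∀ i ∈ freshNeg Φ (p1 Φ t).Z, c s < i) ∧
      IsRun (pickPos hk (Ux Φ)) (Φ ∘ c) ∧
      runZ (pickPos hk (Ux Φ)) (Φ ∘ c) = (p1 Φ t).Z by
    obtain ⟨c, hmono, hneg, -, hrun, -⟩ := h θ le_rfl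
    exact ⟨c, hmono, hneg, hrun⟩
  intro t ht
  induction t with
  | zero =>
    exact ⟨Fin.elim0, fun a => a.elim0, fun a => a.elim0, fun a => a.elim0, trivial, rfl⟩
  | succ t ih =>
    obtain ⟨c, hmono, hneg, hlt, hrun, hZ⟩ := ih (by omega)
    obtain ⟨hE, hZ'⟩ :=
      p1_succ_Z_eq_insert hk (p1_stopped_eq_false (Φ := Φ) (by omega : t + 1 ≤ TT Φ))
    set i := (freshNeg Φ (p1 Φ t).Z).min' hE
    have hi : NegAvoids (Φ i) (p1 Φ t).Z := mem_freshNeg.1 (min'_mem _ _)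
    have hsub : freshNeg Φ (p1 Φ (t + 1)).Z ⊆ freshNeg Φ (p1 Φ t).Z :=
      freshNeg_anti (hZ' ▸ subset_insert _ _)
    -- `φ_t` leaves the fresh clauses, since its variable `z_{t+1}` joins `Z`
    have hi_lt : ∀ i' ∈ freshNeg Φ (p1 Φ (t + 1)).Z, i < i' := by
      intro i' hi'
      refine lt_of_le_of_ne (min'_le _ _ (hsub hi')) fun h => ?_
      rw [← h, mem_freshNeg] at hi'
      exact hi'.2 _ (hZ' ▸ mem_insert_self _ _)
    refine ⟨Fin.snoc c i, Fin.strictMono_snoc hmono fun s => hlt s i (min'_mem _ _),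
      ?_, ?_, ?_, ?_⟩
    · intro s
      induction s using Fin.lastCases with
      | last => rw [Fin.snoc_last]; exact hi.1
      | cast s => simpa using hneg s
    · intro s i' hi'
      induction s using Fin.lastCases with
      | last => simpa using hi_lt i' hi'
      | cast s => simpa using hlt s i' (hsub hi')
    · rw [Fin.comp_snoc]
      exact ⟨by rwa [Fin.init_snoc], by rwa [Fin.snoc_last, Fin.init_snoc, hZ]⟩
    · rw [Fin.comp_snoc, runZ, Fin.init_snoc, Fin.snoc_last, hZ, hZ']

end PhaseOne

section Counting

variable {n m k : ℕ}

lemma card_clause : Fintype.card (Fin k → Lit n) = (2 * n) ^ k := by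
  simp [mul_comm]

lemma card_le_TT_le (hk : 0 < k) (θ : ℕ) :
    #{Φ : Formula n m k | θ ≤ TT Φ} ≤
      m.choose θ * (((2 * n) ^ k) ^ (m - θ) * ∏ t ∈ range θ, (n - t) ^ k) := by
  set bad : (Fin θ → Fin m) → Finset (Formula n m k) := fun c =>
    {Φ | IsRun (pickPos hk (uniqueCount fun i : {i // i ∉ univ.image c} => Φ i)) (Φ ∘ c)}
  calc #{Φ : Formula n m k | θ ≤ TT Φ}
      ≤ #(({c | StrictMono c} : Finset (Fin θ → Fin m)).biUnion bad) := by
        refine card_le_card fun Φ hΦ => ?_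
        obtain ⟨c, hmono, hneg, hrun⟩ := exists_run_of_le_TT hk (mem_filter.1 hΦ).2
        refine mem_biUnion.2
          ⟨c, mem_filter.2 ⟨mem_univ _, hmono⟩, mem_filter.2 ⟨mem_univ _, ?_⟩⟩
        have hS : ∀ i, ¬ i ∉ univ.image c → allNeg Φ i := by
          intro i hi
          obtain ⟨s, -, rfl⟩ := mem_image.1 (not_not.1 hi)
          exact hneg s
        rwa [uniqueCount_subtype_of_allNeg hS, ← Ux_eq_uniqueCount]
    _ ≤ ∑ c ∈ ({c | StrictMono c} : Finset (Fin θ → Fin m)), #(bad c) := card_biUnion_le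
    _ ≤ ∑ _c ∈ ({c | StrictMono c} : Finset (Fin θ → Fin m)),
          ((2 * n) ^ k) ^ (m - θ) * ∏ t ∈ range θ, (n - t) ^ k := by
        refine sum_le_sum fun c hc => ?_
        have h := card_filter_comp_le (C := Fin k → Lit n) (mem_filter.1 hc).2.injective _
          fun g => card_filter_isRun_le (pickPos hk (uniqueCount g)) θ
        rw [Fintype.card_fin, card_clause] at h
        -- the two sides differ only in the `Fintype` instances of the subtype
        refine (le_of_eq ?_).trans h
        congr!
    _ ≤ _ := by
        rw [sum_const, smul_eq_mul]
        exact Nat.mul_le_mul_right _ (card_filter_strictMono_le θ m)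

end Counting

section Probability

variable {n m k : ℕ}

lemma card_formula : Fintype.card (Formula n m k) = ((2 * n) ^ k) ^ m := by
  rw [Fintype.card_fun, card_clause, Fintype.card_fin]

lemma Pr_nonneg (A : Set (Formula n m k)) : 0 ≤ Pr n m k A :=
  div_nonneg (Nat.cast_nonneg _) (Nat.cast_nonneg _)

lemma Pr_compl (hn : 0 < n) (A : Set (Formula n m k)) : Pr n m k Aᶜ = 1 - Pr n m k A := by
  have hpos : (0 : ℝ) < #(univ : Finset (Formula n m k)) := by
    rw [card_univ, card_formula]
    positivity
  rw [eq_sub_iff_add_eq, Pr, Pr, ← add_div, div_eq_one_iff_eq hpos.ne', add_comm]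
  norm_cast
  convert card_filter_add_card_filter_not (s := univ) (· ∈ A) using 3
  ext Φ
  simp

lemma Pr_le_TT_le (hn : 0 < n) (hk : 0 < k) (θ : ℕ) :
    Pr n m k {Φ | θ ≤ TT Φ} ≤
      m.choose θ * ∏ t ∈ range θ, (((n - t : ℕ) : ℝ) / (2 * n)) ^ k := by
  have hbad : (#{Φ : Formula n m k | θ ≤ TT Φ} : ℝ) ≤
      m.choose θ * (((2 * n : ℝ) ^ k) ^ (m - θ) *
        ∏ t ∈ range θ, ((n - t : ℕ) : ℝ) ^ k) := by
    exact_mod_cast card_le_TT_le hk θ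
  simp only [Pr, Set.mem_ofPred_eq]
  rw [card_univ, card_formula, Nat.cast_pow, Nat.cast_pow, Nat.cast_mul, Nat.cast_two,
    div_le_iff₀ (by positivity)]
  rcases le_or_gt θ m with hθm | hθm
  · refine hbad.trans_eq ?_
    simp only [div_pow, prod_div_distrib, prod_const, card_range, ← pow_sub_mul_pow _ hθm]
    field_simp
  · simpa [Nat.choose_eq_zero_of_lt hθm] using hbad

end Probability

lemma mOf_le {ε : ℝ} {k : ℕ} (hω : 0 ≤ omOf ε k) (n : ℕ) :
    (mOf ε k n : ℝ) ≤ omOf ε k * 2 ^ k * n / k := by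
  have h : (1 - ε) * 2 ^ k * Real.log k / k * n = omOf ε k * 2 ^ k * n / k := by
    rw [omOf]
    ring
  calc (mOf ε k n : ℝ) ≤ (1 - ε) * 2 ^ k * Real.log k / k * n :=
        Nat.floor_le (by rw [h]; positivity)
    _ = omOf ε k * 2 ^ k * n / k := h

lemma tendsto_Pr_ceil_le_TT {ε : ℝ} {k : ℕ} (hk : 0 < k) (hω : Real.exp 1 ≤ omOf ε k) :
    Tendsto (fun n : ℕ => Pr n (mOf ε k n) k
      {Φ | ⌈4 * n / k * Real.log (omOf ε k)⌉₊ ≤ TT Φ}) atTop (nhds 0) := by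
  set ω := omOf ε k
  have hL : 0 < Real.log ω := Real.log_pos ((Real.one_lt_exp_iff.2 one_pos).trans_le hω)
  have hθ : Tendsto (fun n : ℕ => ⌈4 * (n : ℝ) / k * Real.log ω⌉₊) atTop atTop :=
    tendsto_nat_ceil_atTop.comp
      (((tendsto_natCast_atTop_atTop.const_mul_atTop four_pos).atTop_div_const
        (by positivity)).atTop_mul_const hL)
  have hbound : Tendsto (fun n : ℕ => ω ^ 2 * (1 / 2 : ℝ) ^ ⌈4 * (n : ℝ) / k * Real.log ω⌉₊)
      atTop (nhds 0) := by
    simpa using ((tendsto_pow_atTop_nhds_zero_of_lt_one (r := (1 / 2 : ℝ)) (by norm_num)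
      (by norm_num)).comp hθ).const_mul (ω ^ 2)
  refine squeeze_zero' (Eventually.of_forall fun n => Pr_nonneg _) ?_ hbound
  filter_upwards [eventually_gt_atTop 0] with n hn
  set θ := ⌈4 * (n : ℝ) / k * Real.log ω⌉₊
  have hθω : 4 * n * Real.log ω ≤ k * θ := by
    calc 4 * n * Real.log ω = 4 * n / k * Real.log ω * k := by field_simp
      _ ≤ θ * k := mul_le_mul_of_nonneg_right (Nat.le_ceil _) (Nat.cast_nonneg k)
      _ = k * θ := mul_comm _ _
  exact (Pr_le_TT_le hn hk θ).trans <| choose_mul_prod_range_sub_div_pow_le hn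
    (Nat.ceil_pos.2 (by positivity)) hω (mOf_le ((Real.exp_pos 1).le.trans hω) n) hθω

theorem statement11_general (ε : ℝ) (hε1 : ε < 0.1) :
    ∃ k₀ : ℕ, ∀ k : ℕ, k₀ ≤ k →
    Tendsto (fun n : ℕ => Pr n (mOf ε k n) k {Φ : Formula n (mOf ε k n) k |
      (TT Φ : ℝ) < 4 * n / k * Real.log (omOf ε k)}) atTop (nhds 1) := by
  have hε : 0 < 1 - ε := by norm_num at hε1 ⊢; linarith
  obtain ⟨k₀, hk₀⟩ := eventually_atTop.1 ((eventually_gt_atTop 0).and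
    (((Real.tendsto_log_atTop.comp tendsto_natCast_atTop_atTop).const_mul_atTop
      hε).eventually_ge_atTop (Real.exp 1)))
  refine ⟨k₀, fun k hk => ?_⟩
  obtain ⟨hk0, hω⟩ := hk₀ k hk
  have h := (tendsto_Pr_ceil_le_TT hk0 hω).const_sub 1
  rw [sub_zero] at h
  refine h.congr' ?_
  filter_upwards [eventually_gt_atTop 0] with n hn
  rw [← Pr_compl hn]
  congr 1
  ext Φ
  simp [Nat.ceil_le]

/-- Corollary 4.  Whp `T < 4nk⁻¹ ln ω`. -/
theorem statement11 (ε : ℝ) (hε0 : 0 < ε) (hε1 : ε < 0.1) :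
    ∃ k₀ : ℕ, ∀ k : ℕ, k₀ ≤ k →
    Tendsto (fun n : ℕ => Pr n (mOf ε k n) k {Φ : Formula n (mOf ε k n) k |
      (TT Φ : ℝ) < 4 * n / k * Real.log (omOf ε k)}) atTop (nhds 1) :=
  statement11_general ε hε1

end RandomKSAT
end
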